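/- arXiv:0710.3992 — 2 statements merged into one kernel-verified Lean document; each statement's English description precedes it below -/
import Mathlib

section
/- Let d ≥ 2, let W : ℂ^d → ℝ be smooth, and suppose there is a real constant Φ with 0 ≤ Φ < d such that the limit lim_{|z|→∞} e^{−W(z)}/|z|^Φ exists and is strictly positive. Then the weight ψ = e^{−W} belongs to the Muckenhoupt class A(2, 2d/(d−1)): there exists C > 0 such that for every ball B ⊂ ℂ^d, ((1/|B|)∫_B e^{−(2d/(d−1))W} dλ)^{(d−1)/(2d)} · ((1/|B|)∫_B e^{2W} dλ)^{1/2} ≤ C. -/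
open MeasureTheory Complex Filter Metric
open Set
open scoped ENNReal NNReal

noncomputable instance (d : ℕ) : MeasurableSpace (EuclideanSpace ℂ (Fin d)) := borel _
instance (d : ℕ) : BorelSpace (EuclideanSpace ℂ (Fin d)) := ⟨rfl⟩

lemma aux_ball_lintegral_bound {E : Type*} [NormedAddCommGroup E] [NormedSpace ℝ E]
    [MeasurableSpace E] [BorelSpace E] [FiniteDimensional ℝ E] [Nontrivial E]
    (μ : Measure E) [μ.IsAddHaarMeasure] {s : ℝ} (hs0 : 0 ≤ s)
    (hsn : s < Module.finrank ℝ E) :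
    ∃ K : ℝ≥0∞, K ≠ ⊤ ∧ ∀ R : ℝ, 0 < R →
      ∫⁻ x in ball (0:E) R, ENNReal.ofReal (‖x‖ ^ (-s)) ∂μ
        ≤ ENNReal.ofReal (R ^ ((Module.finrank ℝ E : ℝ) - s)) * K := by
  classical
  set n := Module.finrank ℝ E with hn
  set nr : ℝ := (n : ℝ) with hnr
  have hq0 : (0:ℝ) < (2:ℝ) ^ (s - nr) := Real.rpow_pos_of_pos (by norm_num) _
  have hq1 : (2:ℝ) ^ (s - nr) < 1 :=
    Real.rpow_lt_one_of_one_lt_of_neg (by norm_num) (by linarith)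
  set q : ℝ≥0∞ := ENNReal.ofReal ((2:ℝ) ^ (s - nr)) with hq
  have hqlt : q < 1 := by
    rw [hq, ← ENNReal.ofReal_one]
    exact ENNReal.ofReal_lt_ofReal_iff_of_nonneg hq0.le |>.mpr hq1
  have hsub : (1 : ℝ≥0∞) - q ≠ 0 := by
    intro h
    exact absurd (tsub_eq_zero_iff_le.mp h) (not_le.mpr hqlt)
  refine ⟨ENNReal.ofReal ((2:ℝ) ^ s) * μ (ball 0 1) * (1 - q)⁻¹, ?_, ?_⟩
  · exact ENNReal.mul_ne_top (ENNReal.mul_ne_top ENNReal.ofReal_ne_top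
      measure_ball_lt_top.ne) (ENNReal.inv_ne_top.mpr hsub)
  intro R hR
  set c : ℕ → ℝ := fun k => R * (2:ℝ) ^ (-(k:ℝ)) with hc
  have hcpos : ∀ k, 0 < c k := fun k => mul_pos hR (Real.rpow_pos_of_pos (by norm_num) _)
  set S : ℕ → Set E := fun k => closedBall (0:E) (c k) \ ball (0:E) (c (k+1)) with hS
  -- covering
  have hcov : ball (0:E) R \ {0} ⊆ ⋃ k, S k := by
    intro x hx
    have hx0 : (0:ℝ) < ‖x‖ := by
      simpa [norm_pos_iff] using hx.2
    have hxR : ‖x‖ < R := by simpa [mem_ball, dist_eq_norm] using hx.1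
    have hex : ∃ m : ℕ, c (m+1) ≤ ‖x‖ := by
      obtain ⟨m, hm⟩ := exists_pow_lt_of_lt_one (div_pos hx0 hR) (by norm_num : (1:ℝ)/2 < 1)
      refine ⟨m, ?_⟩
      have h2 : (2:ℝ) ^ (-((m+1:ℕ):ℝ)) ≤ ((1:ℝ)/2) ^ m := by
        rw [Real.rpow_neg (by norm_num), Real.rpow_natCast, one_div, inv_pow]
        exact inv_anti₀ (by positivity) (pow_le_pow_right₀ (by norm_num) (Nat.le_succ m))
      have : c (m+1) ≤ R * ((1:ℝ)/2)^m := by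
        rw [hc]
        exact mul_le_mul_of_nonneg_left h2 hR.le
      refine this.trans ?_
      have := mul_lt_mul_of_pos_left hm hR
      rw [mul_div_cancel₀ _ hR.ne'] at this
      exact this.le
    set k := Nat.find hex with hk
    have hlb : c (k+1) ≤ ‖x‖ := Nat.find_spec hex
    have hub : ‖x‖ ≤ c k := by
      rcases Nat.eq_zero_or_pos k with h0 | hpos
      · rw [h0]
        simpa [hc] using hxR.le
      · have hmin := Nat.find_min hex (Nat.sub_lt hpos one_pos)
        have hkk : k - 1 + 1 = k := by omega
        rw [hkk] at hmin
        exact (not_le.mp hmin).le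
    exact Set.mem_iUnion.mpr ⟨k, by
      simp only [hS, Set.mem_diff, mem_closedBall, mem_ball, dist_eq_norm, sub_zero]
      exact ⟨by simpa using hub, by simpa using not_lt.mpr hlb⟩⟩
  have hnull : (ball (0:E) R \ {0} : Set E) =ᵐ[μ] ball (0:E) R := by
    rw [diff_ae_eq_self]
    exact measure_mono_null Set.inter_subset_right (measure_singleton 0)
  set f : E → ℝ≥0∞ := fun x => ENNReal.ofReal (‖x‖ ^ (-s)) with hf
  have h2 : (0:ℝ) ≤ 2 := by norm_num
  have hterm : ∀ k : ℕ, ∫⁻ x in S k, f x ∂μ ≤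
      ENNReal.ofReal ((c (k+1)) ^ (-s) * (c k) ^ nr) * μ (ball (0:E) 1) := by
    intro k
    have hb : ∀ x ∈ S k, f x ≤ ENNReal.ofReal ((c (k+1)) ^ (-s)) := by
      intro x hx
      apply ENNReal.ofReal_le_ofReal
      refine Real.rpow_le_rpow_of_nonpos (hcpos (k+1)) ?_ (neg_nonpos.mpr hs0)
      have := hx.2
      simpa [mem_ball, dist_eq_norm, not_lt] using this
    calc ∫⁻ x in S k, f x ∂μ
        ≤ ∫⁻ _ in S k, ENNReal.ofReal ((c (k+1)) ^ (-s)) ∂μ :=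
          setLIntegral_mono measurable_const hb
      _ = ENNReal.ofReal ((c (k+1)) ^ (-s)) * μ (S k) := setLIntegral_const _ _
      _ ≤ ENNReal.ofReal ((c (k+1)) ^ (-s)) * μ (closedBall (0:E) (c k)) := by
          gcongr
          exact Set.diff_subset
      _ = ENNReal.ofReal ((c (k+1)) ^ (-s)) * (ENNReal.ofReal ((c k) ^ nr) * μ (ball (0:E) 1)) := by
          rw [Measure.addHaar_closedBall μ _ (hcpos k).le, ← hn, ← Real.rpow_natCast (c k) n]
      _ = ENNReal.ofReal ((c (k+1)) ^ (-s) * (c k) ^ nr) * μ (ball (0:E) 1) := by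
          rw [ENNReal.ofReal_mul (Real.rpow_nonneg (hcpos (k+1)).le _), mul_assoc]
  have hreal : ∀ k : ℕ, (c (k+1)) ^ (-s) * (c k) ^ nr
      = R ^ (nr - s) * (2:ℝ) ^ s * ((2:ℝ) ^ (s - nr)) ^ k := by
    intro k
    have e1 : (c (k+1)) ^ (-s) = R ^ (-s) * (2:ℝ) ^ (((k:ℝ)+1) * s) := by
      simp only [hc]
      rw [Real.mul_rpow hR.le (Real.rpow_nonneg h2 _), ← Real.rpow_mul h2]
      congr 1
      push_cast
      ring
    have e2 : (c k) ^ nr = R ^ nr * (2:ℝ) ^ (-(k:ℝ) * nr) := by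
      simp only [hc]
      rw [Real.mul_rpow hR.le (Real.rpow_nonneg h2 _), ← Real.rpow_mul h2]
    rw [e1, e2, ← Real.rpow_natCast ((2:ℝ) ^ (s - nr)) k, ← Real.rpow_mul h2]
    calc (R ^ (-s) * (2:ℝ) ^ (((k:ℝ)+1) * s)) * (R ^ nr * (2:ℝ) ^ (-(k:ℝ) * nr))
        = (R ^ (-s) * R ^ nr) * ((2:ℝ) ^ (((k:ℝ)+1) * s) * (2:ℝ) ^ (-(k:ℝ) * nr)) := by ring
      _ = R ^ (-s + nr) * (2:ℝ) ^ (((k:ℝ)+1) * s + -(k:ℝ) * nr) := by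
          rw [← Real.rpow_add hR, ← Real.rpow_add (by norm_num : (0:ℝ) < 2)]
      _ = R ^ (nr - s) * (2:ℝ) ^ (s + (s - nr) * (k:ℝ)) := by
          rw [show -s + nr = nr - s from by ring,
            show ((k:ℝ)+1) * s + -(k:ℝ) * nr = s + (s - nr) * (k:ℝ) from by ring]
      _ = R ^ (nr - s) * (2:ℝ) ^ s * (2:ℝ) ^ ((s - nr) * (k:ℝ)) := by
          rw [Real.rpow_add (by norm_num : (0:ℝ) < 2)]
          ring
  calc ∫⁻ x in ball (0:E) R, f x ∂μ
      = ∫⁻ x in ball (0:E) R \ {0}, f x ∂μ := (setLIntegral_congr hnull).symm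
    _ ≤ ∑' k, ∫⁻ x in S k, f x ∂μ :=
        (lintegral_mono_set hcov).trans (lintegral_iUnion_le _ _)
    _ ≤ ∑' k : ℕ, (ENNReal.ofReal (R ^ (nr - s)) * ENNReal.ofReal ((2:ℝ) ^ s)
          * μ (ball (0:E) 1)) * q ^ k := by
        refine ENNReal.tsum_le_tsum fun k => (hterm k).trans (le_of_eq ?_)
        rw [hreal k, ENNReal.ofReal_mul (by positivity), ENNReal.ofReal_mul (by positivity),
          ENNReal.ofReal_pow hq0.le]
        ring
    _ = ENNReal.ofReal (R ^ (nr - s)) *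
          (ENNReal.ofReal ((2:ℝ) ^ s) * μ (ball (0:E) 1) * (1 - q)⁻¹) := by
        rw [ENNReal.tsum_mul_left, ENNReal.tsum_geometric]
        ring

lemma aux_weight_bounds {E : Type*} [NormedAddCommGroup E] [NormedSpace ℝ E] [ProperSpace E]
    (W : E → ℝ) (hW : Continuous W) (Φ : ℝ) (hΦ0 : 0 ≤ Φ) (L : ℝ) (hL : 0 < L)
    (hlim : Tendsto (fun z : E => Real.exp (-W z) / ‖z‖ ^ Φ)
      (Bornology.cobounded E) (nhds L)) :
    ∃ c1 c2 : ℝ, 0 < c1 ∧ 0 < c2 ∧ ∀ z : E,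
      c1 * (1 + ‖z‖) ^ Φ ≤ Real.exp (-W z) ∧ Real.exp (-W z) ≤ c2 * (1 + ‖z‖) ^ Φ := by
  have h3 : ∀ᶠ z in Bornology.cobounded E,
      L/2 < Real.exp (-W z) / ‖z‖ ^ Φ ∧ Real.exp (-W z) / ‖z‖ ^ Φ < 2*L :=
    (hlim.eventually (eventually_gt_nhds (by linarith))).and
      (hlim.eventually (eventually_lt_nhds (by linarith)))
  rw [← comap_norm_atTop, eventually_comap] at h3
  rw [eventually_atTop] at h3
  obtain ⟨R, hR⟩ := h3
  set R0 : ℝ := max R 1 with hR0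
  have hR01 : (1:ℝ) ≤ R0 := le_max_right _ _
  have hout : ∀ z : E, R0 < ‖z‖ →
      L/2 < Real.exp (-W z) / ‖z‖ ^ Φ ∧ Real.exp (-W z) / ‖z‖ ^ Φ < 2*L := by
    intro z hz
    exact hR ‖z‖ (le_trans (le_max_left _ _) hz.le) z rfl
  -- continuous comparison function on the compact part
  set g : E → ℝ := fun z => Real.exp (-W z) / (1 + ‖z‖) ^ Φ with hg
  have hden : ∀ z : E, (0:ℝ) < (1 + ‖z‖) ^ Φ := fun z =>
    Real.rpow_pos_of_pos (by positivity) _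
  have hgc : Continuous g := by
    apply Continuous.div
    · exact Real.continuous_exp.comp hW.neg
    · exact (continuous_const.add continuous_norm).rpow_const fun z => Or.inr hΦ0
    · exact fun z => (hden z).ne'
  have hgpos : ∀ z : E, 0 < g z := fun z => div_pos (Real.exp_pos _) (hden z)
  obtain ⟨z1, -, hz1'⟩ := (isCompact_closedBall (0:E) R0).exists_isMinOn
    ⟨0, mem_closedBall_self (by linarith)⟩ hgc.continuousOn
  obtain ⟨z2, -, hz2'⟩ := (isCompact_closedBall (0:E) R0).exists_isMaxOn
    ⟨0, mem_closedBall_self (by linarith)⟩ hgc.continuousOn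
  have hz1 : ∀ y ∈ closedBall (0:E) R0, g z1 ≤ g y := fun y hy => hz1' hy
  have hz2 : ∀ y ∈ closedBall (0:E) R0, g y ≤ g z2 := fun y hy => hz2' hy
  refine ⟨min (g z1) (L/2 * (2:ℝ) ^ (-Φ)), max (g z2) (2*L), ?_, ?_, ?_⟩
  · exact lt_min (hgpos z1) (by positivity)
  · exact lt_of_lt_of_le (hgpos z2) (le_max_left _ _)
  intro z
  by_cases hzR : ‖z‖ ≤ R0
  · have hzK : z ∈ closedBall (0:E) R0 := by simpa [mem_closedBall, dist_eq_norm] using hzR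
    have h1 : min (g z1) (L/2 * (2:ℝ) ^ (-Φ)) ≤ g z := (min_le_left _ _).trans (hz1 z hzK)
    have h2 : g z ≤ max (g z2) (2*L) := (hz2 z hzK).trans (le_max_left _ _)
    constructor
    · calc min (g z1) (L/2 * (2:ℝ) ^ (-Φ)) * (1 + ‖z‖) ^ Φ
          ≤ g z * (1 + ‖z‖) ^ Φ := by
            exact mul_le_mul_of_nonneg_right h1 (hden z).le
        _ = Real.exp (-W z) := by
            rw [hg]; field_simp
    · calc Real.exp (-W z) = g z * (1 + ‖z‖) ^ Φ := by rw [hg]; field_simp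
        _ ≤ max (g z2) (2*L) * (1 + ‖z‖) ^ Φ := by
            exact mul_le_mul_of_nonneg_right h2 (hden z).le
  · push_neg at hzR
    have hz1' : (1:ℝ) ≤ ‖z‖ := le_trans hR01 hzR.le
    have hnz : (0:ℝ) < ‖z‖ ^ Φ := Real.rpow_pos_of_pos (by linarith) _
    obtain ⟨hlow, hup⟩ := hout z hzR
    have hlow' : L/2 * ‖z‖ ^ Φ ≤ Real.exp (-W z) := ((lt_div_iff₀ hnz).mp hlow).le
    have hup' : Real.exp (-W z) ≤ 2*L * ‖z‖ ^ Φ := ((div_lt_iff₀ hnz).mp hup).le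
    have hb1 : (1 + ‖z‖) ^ Φ ≤ (2:ℝ) ^ Φ * ‖z‖ ^ Φ := by
      rw [← Real.mul_rpow (by norm_num) (norm_nonneg z)]
      exact Real.rpow_le_rpow (by positivity) (by linarith) hΦ0
    have hb2 : ‖z‖ ^ Φ ≤ (1 + ‖z‖) ^ Φ :=
      Real.rpow_le_rpow (norm_nonneg z) (by linarith) hΦ0
    have h2pos : (0:ℝ) < (2:ℝ) ^ Φ := Real.rpow_pos_of_pos (by norm_num) _
    constructor
    · calc min (g z1) (L/2 * (2:ℝ) ^ (-Φ)) * (1 + ‖z‖) ^ Φ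
          ≤ (L/2 * (2:ℝ) ^ (-Φ)) * (1 + ‖z‖) ^ Φ := by
            exact mul_le_mul_of_nonneg_right (min_le_right _ _) (hden z).le
        _ ≤ (L/2 * (2:ℝ) ^ (-Φ)) * ((2:ℝ) ^ Φ * ‖z‖ ^ Φ) := by
            exact mul_le_mul_of_nonneg_left hb1 (by positivity)
        _ = L/2 * ‖z‖ ^ Φ := by
            rw [Real.rpow_neg (by norm_num)]
            field_simp
        _ ≤ Real.exp (-W z) := hlow'
    · calc Real.exp (-W z) ≤ 2*L * ‖z‖ ^ Φ := hup'
        _ ≤ 2*L * (1 + ‖z‖) ^ Φ := by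
            exact mul_le_mul_of_nonneg_left hb2 (by positivity)
        _ ≤ max (g z2) (2*L) * (1 + ‖z‖) ^ Φ := by
            exact mul_le_mul_of_nonneg_right (le_max_right _ _) (hden z).le



/-- If `e^{-W(z)}/|z|^Φ` has a positive limit at infinity with `0 ≤ Φ < d`, then the
weight `ψ = e^{-W}` belongs to the Muckenhoupt class `A(2, 2d/(d-1))`:
there is `C > 0` such that for every ball `B`,
`((1/|B|)∫_B ψ^{2d/(d-1)})^{(d-1)/(2d)} · ((1/|B|)∫_B ψ^{-2})^{1/2} ≤ C`. -/
theorem statement_7 (d : ℕ) (hd : 2 ≤ d)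
    (W : EuclideanSpace ℂ (Fin d) → ℝ) (hWsmooth : ContDiff ℝ (⊤ : ℕ∞) W)
    (Φ : ℝ) (hΦ0 : 0 ≤ Φ) (hΦd : Φ < d)
    (L : ℝ) (hL : 0 < L)
    (hlim : Tendsto (fun z : EuclideanSpace ℂ (Fin d) => Real.exp (-W z) / ‖z‖ ^ Φ)
      (Bornology.cobounded (EuclideanSpace ℂ (Fin d))) (nhds L)) :
    ∃ C > (0 : ℝ), ∀ (x : EuclideanSpace ℂ (Fin d)) (r : ℝ), 0 < r →
      ((∫⁻ z in ball x r, ENNReal.ofReal (Real.exp (-W z)) ^ (2 * (d : ℝ) / (d - 1)))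
          / volume (ball x r)) ^ (((d : ℝ) - 1) / (2 * d)) *
      ((∫⁻ z in ball x r, ENNReal.ofReal (Real.exp (-W z)) ^ (-2 : ℝ))
          / volume (ball x r)) ^ ((1 : ℝ) / 2)
        ≤ ENNReal.ofReal C := by
  classical
  have hfr : Module.finrank ℝ (EuclideanSpace ℂ (Fin d)) = 2 * d := by
    simp [EuclideanSpace, PiLp, WithLp, Module.finrank_pi_fintype,
      Complex.finrank_real_complex, mul_comm]
    rw [(WithLp.linearEquiv 2 ℝ (Fin d → ℂ)).finrank_eq]
    simp [Module.finrank_pi_fintype, Complex.finrank_real_complex, mul_comm]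
  haveI : Nontrivial (EuclideanSpace ℂ (Fin d)) := by
    have h : 0 < Module.finrank ℝ (EuclideanSpace ℂ (Fin d)) := by omega
    exact Module.nontrivial_of_finrank_pos h
  have hdR : (2:ℝ) ≤ (d:ℝ) := by exact_mod_cast hd
  have hd1 : (0:ℝ) < (d:ℝ) - 1 := by linarith
  set q : ℝ := 2 * (d:ℝ) / ((d:ℝ) - 1) with hqdef
  set a : ℝ := ((d:ℝ) - 1) / (2 * (d:ℝ)) with hadef
  have hq : 0 < q := by positivity
  have ha : 0 < a := by positivity
  have hqa : q * a = 1 := by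
    rw [hqdef, hadef]; field_simp
  obtain ⟨c1, c2, hc1, hc2, hbd⟩ :=
    aux_weight_bounds W hWsmooth.continuous Φ hΦ0 L hL hlim
  have hs0 : (0:ℝ) ≤ 2 * Φ := by linarith
  have hsn : 2 * Φ < Module.finrank ℝ (EuclideanSpace ℂ (Fin d)) := by
    rw [hfr]; push_cast; linarith
  obtain ⟨K, hKtop, hK⟩ :=
    aux_ball_lintegral_bound (volume : Measure (EuclideanSpace ℂ (Fin d))) hs0 hsn
  set V1 := volume (ball (0 : EuclideanSpace ℂ (Fin d)) 1) with hV1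
  have hV10 : V1 ≠ 0 := (measure_ball_pos _ _ one_pos).ne'
  have hV1t : V1 ≠ ⊤ := measure_ball_lt_top.ne
  set K2 : ℝ≥0∞ := (ENNReal.ofReal ((3:ℝ) ^ (2*(d:ℝ) - 2*Φ)) * K * V1⁻¹) ^ ((1:ℝ)/2) with hK2
  have hK2t : K2 ≠ ⊤ := by
    refine (ENNReal.rpow_lt_top_of_nonneg (by norm_num) ?_).ne
    exact ENNReal.mul_ne_top (ENNReal.mul_ne_top ENNReal.ofReal_ne_top hKtop)
      (ENNReal.inv_ne_top.mpr hV10)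
  set D : ℝ≥0∞ := ENNReal.ofReal ((4:ℝ)^Φ) + ENNReal.ofReal ((3:ℝ)^Φ) * K2 with hD
  have hDt : D ≠ ⊤ :=
    ENNReal.add_ne_top.mpr ⟨ENNReal.ofReal_ne_top, ENNReal.mul_ne_top ENNReal.ofReal_ne_top hK2t⟩
  set T : ℝ≥0∞ := ENNReal.ofReal (c2 * c1⁻¹) * D with hT
  have hTt : T ≠ ⊤ := ENNReal.mul_ne_top ENNReal.ofReal_ne_top hDt
  refine ⟨T.toReal + 1, by positivity, ?_⟩
  intro x r hr
  have hmain : ((∫⁻ z in ball x r, ENNReal.ofReal (Real.exp (-W z)) ^ q)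
          / volume (ball x r)) ^ a *
      ((∫⁻ z in ball x r, ENNReal.ofReal (Real.exp (-W z)) ^ (-2 : ℝ))
          / volume (ball x r)) ^ ((1 : ℝ) / 2) ≤ T := by
    have hV0 : volume (ball x r) ≠ 0 := (measure_ball_pos _ _ hr).ne'
    have hVt : volume (ball x r) ≠ ⊤ := measure_ball_lt_top.ne
    set G1 := ∫⁻ z in ball x r, ENNReal.ofReal ((1+‖z‖) ^ (Φ*q)) with hG1def
    set G2 := ∫⁻ z in ball x r, ENNReal.ofReal ((1+‖z‖) ^ (Φ*(-2:ℝ))) with hG2def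
    have hpt1 : ∀ z : EuclideanSpace ℂ (Fin d), ENNReal.ofReal (Real.exp (-W z)) ^ q
        ≤ ENNReal.ofReal (c2 ^ q) * ENNReal.ofReal ((1+‖z‖) ^ (Φ*q)) := by
      intro z
      rw [ENNReal.ofReal_rpow_of_pos (Real.exp_pos _), ← ENNReal.ofReal_mul (by positivity)]
      apply ENNReal.ofReal_le_ofReal
      calc Real.exp (-W z) ^ q ≤ (c2 * (1+‖z‖)^Φ) ^ q :=
            Real.rpow_le_rpow (Real.exp_pos _).le (hbd z).2 hq.le
        _ = c2 ^ q * (1+‖z‖) ^ (Φ*q) := by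
            rw [Real.mul_rpow hc2.le (Real.rpow_nonneg (by positivity) _),
              ← Real.rpow_mul (by positivity)]
    have hpt2 : ∀ z : EuclideanSpace ℂ (Fin d), ENNReal.ofReal (Real.exp (-W z)) ^ (-2:ℝ)
        ≤ ENNReal.ofReal (c1 ^ (-2:ℝ)) * ENNReal.ofReal ((1+‖z‖) ^ (Φ*(-2:ℝ))) := by
      intro z
      rw [ENNReal.ofReal_rpow_of_pos (Real.exp_pos _), ← ENNReal.ofReal_mul (by positivity)]
      apply ENNReal.ofReal_le_ofReal
      calc Real.exp (-W z) ^ (-2:ℝ) ≤ (c1 * (1+‖z‖)^Φ) ^ (-2:ℝ) :=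
            Real.rpow_le_rpow_of_nonpos (by positivity) (hbd z).1 (by norm_num)
        _ = c1 ^ (-2:ℝ) * (1+‖z‖) ^ (Φ*(-2:ℝ)) := by
            rw [Real.mul_rpow hc1.le (Real.rpow_nonneg (by positivity) _),
              ← Real.rpow_mul (by positivity)]
    have hA1 : (∫⁻ z in ball x r, ENNReal.ofReal (Real.exp (-W z)) ^ q)
        ≤ ENNReal.ofReal (c2 ^ q) * G1 := by
      rw [hG1def, ← lintegral_const_mul' _ _ ENNReal.ofReal_ne_top]
      exact lintegral_mono fun z => hpt1 z
    have hA2 : (∫⁻ z in ball x r, ENNReal.ofReal (Real.exp (-W z)) ^ (-2:ℝ))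
        ≤ ENNReal.ofReal (c1 ^ (-2:ℝ)) * G2 := by
      rw [hG2def, ← lintegral_const_mul' _ _ ENNReal.ofReal_ne_top]
      exact lintegral_mono fun z => hpt2 z
    have hF1 : ((∫⁻ z in ball x r, ENNReal.ofReal (Real.exp (-W z)) ^ q)
          / volume (ball x r)) ^ a
        ≤ ENNReal.ofReal c2 * (G1 / volume (ball x r)) ^ a := by
      calc ((∫⁻ z in ball x r, ENNReal.ofReal (Real.exp (-W z)) ^ q) / volume (ball x r)) ^ a
          ≤ ((ENNReal.ofReal (c2 ^ q) * G1) / volume (ball x r)) ^ a :=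
            ENNReal.rpow_le_rpow (ENNReal.div_le_div_right hA1 _) ha.le
        _ = (ENNReal.ofReal (c2 ^ q)) ^ a * (G1 / volume (ball x r)) ^ a := by
            rw [mul_div_assoc, ENNReal.mul_rpow_of_nonneg _ _ ha.le]
        _ = ENNReal.ofReal c2 * (G1 / volume (ball x r)) ^ a := by
            rw [ENNReal.ofReal_rpow_of_pos (by positivity), ← Real.rpow_mul hc2.le,
              hqa, Real.rpow_one]
    have hF2 : ((∫⁻ z in ball x r, ENNReal.ofReal (Real.exp (-W z)) ^ (-2:ℝ))
          / volume (ball x r)) ^ ((1:ℝ)/2)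
        ≤ ENNReal.ofReal c1⁻¹ * (G2 / volume (ball x r)) ^ ((1:ℝ)/2) := by
      calc ((∫⁻ z in ball x r, ENNReal.ofReal (Real.exp (-W z)) ^ (-2:ℝ))
            / volume (ball x r)) ^ ((1:ℝ)/2)
          ≤ ((ENNReal.ofReal (c1 ^ (-2:ℝ)) * G2) / volume (ball x r)) ^ ((1:ℝ)/2) :=
            ENNReal.rpow_le_rpow (ENNReal.div_le_div_right hA2 _) (by norm_num)
        _ = (ENNReal.ofReal (c1 ^ (-2:ℝ))) ^ ((1:ℝ)/2)
              * (G2 / volume (ball x r)) ^ ((1:ℝ)/2) := by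
            rw [mul_div_assoc, ENNReal.mul_rpow_of_nonneg _ _ (by norm_num : (0:ℝ) ≤ 1/2)]
        _ = ENNReal.ofReal c1⁻¹ * (G2 / volume (ball x r)) ^ ((1:ℝ)/2) := by
            rw [ENNReal.ofReal_rpow_of_pos (by positivity), ← Real.rpow_mul hc1.le,
              show (-2:ℝ) * (1/2) = -1 by norm_num, Real.rpow_neg_one]
    have hcore : (G1 / volume (ball x r)) ^ a * (G2 / volume (ball x r)) ^ ((1:ℝ)/2) ≤ D := by
      have hΦq : (0:ℝ) ≤ Φ * q := by positivity
      have hΦ2 : Φ * (-2:ℝ) ≤ 0 := by nlinarith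
      have hnorm : ∀ z ∈ ball x r, ‖z‖ < ‖x‖ + r := by
        intro z hz
        have h1 : ‖z‖ - ‖x‖ ≤ ‖z - x‖ := norm_sub_norm_le z x
        have h2 : ‖z - x‖ < r := by rw [← dist_eq_norm]; exact mem_ball.mp hz
        linarith
      by_cases hcase : r ≤ (1 + ‖x‖)/2
      · -- small ball
        have hub : ∀ z ∈ ball x r, 1 + ‖z‖ ≤ 2*(1+‖x‖) := by
          intro z hz
          have := hnorm z hz
          linarith
        have hlb : ∀ z ∈ ball x r, (1+‖x‖)/2 ≤ 1 + ‖z‖ := by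
          intro z hz
          have h1 : ‖x‖ - ‖z‖ ≤ ‖x - z‖ := norm_sub_norm_le x z
          have h2 : ‖x - z‖ < r := by
            rw [← dist_eq_norm, dist_comm]
            exact mem_ball.mp hz
          linarith
        have hG1b : G1 ≤ ENNReal.ofReal ((2*(1+‖x‖)) ^ (Φ*q)) * volume (ball x r) := by
          rw [hG1def]
          calc (∫⁻ z in ball x r, ENNReal.ofReal ((1+‖z‖) ^ (Φ*q)))
              ≤ ∫⁻ _ in ball x r, ENNReal.ofReal ((2*(1+‖x‖)) ^ (Φ*q)) :=
                setLIntegral_mono measurable_const fun z hz =>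
                  ENNReal.ofReal_le_ofReal
                    (Real.rpow_le_rpow (by positivity) (hub z hz) hΦq)
            _ = _ := setLIntegral_const _ _
        have hG2b : G2 ≤ ENNReal.ofReal (((1+‖x‖)/2) ^ (Φ*(-2:ℝ))) * volume (ball x r) := by
          rw [hG2def]
          calc (∫⁻ z in ball x r, ENNReal.ofReal ((1+‖z‖) ^ (Φ*(-2:ℝ))))
              ≤ ∫⁻ _ in ball x r, ENNReal.ofReal (((1+‖x‖)/2) ^ (Φ*(-2:ℝ))) :=
                setLIntegral_mono measurable_const fun z hz =>
                  ENNReal.ofReal_le_ofReal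
                    (Real.rpow_le_rpow_of_nonpos (by positivity) (hlb z hz) hΦ2)
            _ = _ := setLIntegral_const _ _
        have e1 : (G1 / volume (ball x r)) ^ a ≤ ENNReal.ofReal ((2*(1+‖x‖)) ^ Φ) := by
          calc (G1 / volume (ball x r)) ^ a
              ≤ (ENNReal.ofReal ((2*(1+‖x‖)) ^ (Φ*q))) ^ a :=
                ENNReal.rpow_le_rpow (ENNReal.div_le_of_le_mul hG1b) ha.le
            _ = ENNReal.ofReal ((2*(1+‖x‖)) ^ Φ) := by
                rw [ENNReal.ofReal_rpow_of_pos (by positivity),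
                  ← Real.rpow_mul (by positivity), mul_assoc, hqa, mul_one]
        have e2 : (G2 / volume (ball x r)) ^ ((1:ℝ)/2)
            ≤ ENNReal.ofReal (((1+‖x‖)/2) ^ (-Φ)) := by
          calc (G2 / volume (ball x r)) ^ ((1:ℝ)/2)
              ≤ (ENNReal.ofReal (((1+‖x‖)/2) ^ (Φ*(-2:ℝ)))) ^ ((1:ℝ)/2) :=
                ENNReal.rpow_le_rpow (ENNReal.div_le_of_le_mul hG2b) (by norm_num)
            _ = ENNReal.ofReal (((1+‖x‖)/2) ^ (-Φ)) := by
                rw [ENNReal.ofReal_rpow_of_pos (by positivity),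
                  ← Real.rpow_mul (by positivity),
                  show Φ * (-2:ℝ) * (1/2) = -Φ by ring]
        calc (G1 / volume (ball x r)) ^ a * (G2 / volume (ball x r)) ^ ((1:ℝ)/2)
            ≤ ENNReal.ofReal ((2*(1+‖x‖)) ^ Φ) * ENNReal.ofReal (((1+‖x‖)/2) ^ (-Φ)) :=
              mul_le_mul' e1 e2
          _ = ENNReal.ofReal ((4:ℝ)^Φ) := by
              rw [← ENNReal.ofReal_mul (by positivity)]
              congr 1
              have hx2 : (0:ℝ) < (1+‖x‖)/2 := by positivity
              rw [Real.rpow_neg hx2.le, ← div_eq_mul_inv,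
                ← Real.div_rpow (by positivity) hx2.le]
              congr 1
              field_simp
              ring
          _ ≤ D := by rw [hD]; exact le_self_add
      · -- big ball
        push_neg at hcase
        have hub' : ∀ z ∈ ball x r, 1 + ‖z‖ ≤ 3*r := by
          intro z hz
          have := hnorm z hz
          linarith
        have hsub : ball x r ⊆ ball (0 : EuclideanSpace ℂ (Fin d)) (3*r) := by
          intro z hz
          rw [mem_ball, dist_zero_right]
          have := hnorm z hz
          linarith
        have hG1b : G1 ≤ ENNReal.ofReal ((3*r) ^ (Φ*q)) * volume (ball x r) := by
          rw [hG1def]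
          calc (∫⁻ z in ball x r, ENNReal.ofReal ((1+‖z‖) ^ (Φ*q)))
              ≤ ∫⁻ _ in ball x r, ENNReal.ofReal ((3*r) ^ (Φ*q)) :=
                setLIntegral_mono measurable_const fun z hz =>
                  ENNReal.ofReal_le_ofReal
                    (Real.rpow_le_rpow (by positivity) (hub' z hz) hΦq)
            _ = _ := setLIntegral_const _ _
        have e1 : (G1 / volume (ball x r)) ^ a ≤ ENNReal.ofReal ((3*r) ^ Φ) := by
          calc (G1 / volume (ball x r)) ^ a
              ≤ (ENNReal.ofReal ((3*r) ^ (Φ*q))) ^ a :=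
                ENNReal.rpow_le_rpow (ENNReal.div_le_of_le_mul hG1b) ha.le
            _ = ENNReal.ofReal ((3*r) ^ Φ) := by
                rw [ENNReal.ofReal_rpow_of_pos (by positivity),
                  ← Real.rpow_mul (by positivity), mul_assoc, hqa, mul_one]
        have haez : ∀ᵐ z : EuclideanSpace ℂ (Fin d) ∂volume, z ≠ 0 := by
          rw [ae_iff]
          have h0 : {z : EuclideanSpace ℂ (Fin d) | ¬ z ≠ 0} = {0} := by ext z; simp
          rw [h0]
          exact measure_singleton 0
        have hfrc : ((Module.finrank ℝ (EuclideanSpace ℂ (Fin d)) : ℕ) : ℝ) = 2*(d:ℝ) := by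
          rw [hfr]; push_cast; ring
        have hG2b : G2 ≤ ENNReal.ofReal ((3*r) ^ (2*(d:ℝ) - 2*Φ)) * K := by
          rw [hG2def]
          calc (∫⁻ z in ball x r, ENNReal.ofReal ((1+‖z‖) ^ (Φ*(-2:ℝ))))
              ≤ ∫⁻ z in ball (0 : EuclideanSpace ℂ (Fin d)) (3*r),
                  ENNReal.ofReal ((1+‖z‖) ^ (Φ*(-2:ℝ))) := lintegral_mono_set hsub
            _ ≤ ∫⁻ z in ball (0 : EuclideanSpace ℂ (Fin d)) (3*r),
                  ENNReal.ofReal (‖z‖ ^ (-(2*Φ))) := by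
                refine lintegral_mono_ae ?_
                filter_upwards [ae_restrict_of_ae haez] with z hz
                apply ENNReal.ofReal_le_ofReal
                have h0 : 0 < ‖z‖ := norm_pos_iff.mpr hz
                calc (1+‖z‖) ^ (Φ*(-2:ℝ)) = (1+‖z‖) ^ (-(2*Φ)) := by ring_nf
                  _ ≤ ‖z‖ ^ (-(2*Φ)) :=
                    Real.rpow_le_rpow_of_nonpos h0 (by linarith) (by linarith)
            _ ≤ ENNReal.ofReal ((3*r) ^ (2*(d:ℝ) - 2*Φ)) * K := by
                have := hK (3*r) (by linarith)
                rwa [hfrc] at this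
        have hVeq : volume (ball x r) = ENNReal.ofReal (r ^ (2*d)) * V1 := by
          rw [Measure.addHaar_ball volume x hr.le, hfr]
        have hrnn0 : ENNReal.ofReal (r ^ (2*d)) ≠ 0 := by
          simp only [ne_eq, ENNReal.ofReal_eq_zero, not_le]
          positivity
        have hkey : ENNReal.ofReal ((3*r) ^ (2*(d:ℝ) - 2*Φ)) * K / volume (ball x r)
            = (ENNReal.ofReal ((3:ℝ) ^ (2*(d:ℝ) - 2*Φ)) * K * V1⁻¹)
              * ENNReal.ofReal (r ^ (-(2*Φ))) := by
          have hsplit : (3*r) ^ (2*(d:ℝ) - 2*Φ)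
              = (3:ℝ) ^ (2*(d:ℝ) - 2*Φ) * (r ^ (2*d) * r ^ (-(2*Φ))) := by
            rw [Real.mul_rpow (by norm_num) hr.le]
            congr 1
            rw [show 2*(d:ℝ) - 2*Φ = 2*(d:ℝ) + -(2*Φ) by ring, Real.rpow_add hr,
              show (2*(d:ℝ)) = ((2*d : ℕ) : ℝ) by push_cast; ring, Real.rpow_natCast]
          rw [hVeq, hsplit, ENNReal.ofReal_mul (by positivity),
            ENNReal.ofReal_mul (by positivity), div_eq_mul_inv,
            ENNReal.mul_inv (Or.inl hrnn0) (Or.inl ENNReal.ofReal_ne_top)]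
          calc ENNReal.ofReal ((3:ℝ) ^ (2*(d:ℝ) - 2*Φ))
                * (ENNReal.ofReal (r ^ (2*d)) * ENNReal.ofReal (r ^ (-(2*Φ)))) * K
                * ((ENNReal.ofReal (r ^ (2*d)))⁻¹ * V1⁻¹)
              = (ENNReal.ofReal ((3:ℝ) ^ (2*(d:ℝ) - 2*Φ)) * K * V1⁻¹
                  * ENNReal.ofReal (r ^ (-(2*Φ))))
                * (ENNReal.ofReal (r ^ (2*d)) * (ENNReal.ofReal (r ^ (2*d)))⁻¹) := by ring
            _ = _ := by
                rw [ENNReal.mul_inv_cancel hrnn0 ENNReal.ofReal_ne_top, mul_one]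
        have e2 : (G2 / volume (ball x r)) ^ ((1:ℝ)/2) ≤ K2 * ENNReal.ofReal (r ^ (-Φ)) := by
          calc (G2 / volume (ball x r)) ^ ((1:ℝ)/2)
              ≤ ((ENNReal.ofReal ((3:ℝ) ^ (2*(d:ℝ) - 2*Φ)) * K * V1⁻¹)
                  * ENNReal.ofReal (r ^ (-(2*Φ)))) ^ ((1:ℝ)/2) := by
                refine ENNReal.rpow_le_rpow ?_ (by norm_num)
                rw [← hkey]
                exact ENNReal.div_le_div_right hG2b _
            _ = K2 * (ENNReal.ofReal (r ^ (-(2*Φ)))) ^ ((1:ℝ)/2) := by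
                rw [ENNReal.mul_rpow_of_nonneg _ _ (by norm_num : (0:ℝ) ≤ 1/2), hK2]
            _ = K2 * ENNReal.ofReal (r ^ (-Φ)) := by
                rw [ENNReal.ofReal_rpow_of_pos (by positivity),
                  ← Real.rpow_mul hr.le, show -(2*Φ) * (1/2) = -Φ by ring]
        calc (G1 / volume (ball x r)) ^ a * (G2 / volume (ball x r)) ^ ((1:ℝ)/2)
            ≤ ENNReal.ofReal ((3*r) ^ Φ) * (K2 * ENNReal.ofReal (r ^ (-Φ))) :=
              mul_le_mul' e1 e2
          _ = ENNReal.ofReal ((3:ℝ)^Φ) * K2 := by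
              rw [show ENNReal.ofReal ((3*r) ^ Φ) * (K2 * ENNReal.ofReal (r ^ (-Φ)))
                  = ENNReal.ofReal ((3*r) ^ Φ) * ENNReal.ofReal (r ^ (-Φ)) * K2 by ring,
                ← ENNReal.ofReal_mul (by positivity)]
              congr 2
              rw [Real.mul_rpow (by norm_num) hr.le, mul_assoc, ← Real.rpow_add hr,
                add_neg_cancel, Real.rpow_zero, mul_one]
          _ ≤ D := by rw [hD]; exact le_add_self

    calc ((∫⁻ z in ball x r, ENNReal.ofReal (Real.exp (-W z)) ^ q) / volume (ball x r)) ^ a *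
        ((∫⁻ z in ball x r, ENNReal.ofReal (Real.exp (-W z)) ^ (-2 : ℝ))
            / volume (ball x r)) ^ ((1 : ℝ) / 2)
        ≤ (ENNReal.ofReal c2 * (G1 / volume (ball x r)) ^ a)
            * (ENNReal.ofReal c1⁻¹ * (G2 / volume (ball x r)) ^ ((1:ℝ)/2)) :=
          mul_le_mul' hF1 hF2
      _ = ENNReal.ofReal (c2 * c1⁻¹)
            * ((G1 / volume (ball x r)) ^ a * (G2 / volume (ball x r)) ^ ((1:ℝ)/2)) := by
          rw [ENNReal.ofReal_mul hc2.le]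
          ring
      _ ≤ ENNReal.ofReal (c2 * c1⁻¹) * D := mul_le_mul_right hcore _
      _ = T := by rw [hT]

  calc _ ≤ T := hmain
    _ = ENNReal.ofReal T.toReal := (ENNReal.ofReal_toReal hTt).symm
    _ ≤ ENNReal.ofReal (T.toReal + 1) := ENNReal.ofReal_le_ofReal (by linarith)
end

section
/- Let d ≥ 1, Φ ∈ ℝ, and let f : ℂ^d → ℂ be holomorphic (complex-differentiable on all of ℂ^d). If ∫_{ℂ^d} |f(z)|² (1+|z|)^{−2Φ} dλ(z) < ∞, then f is a polynomial in z^1,…,z^d of total degree strictly less than Φ − d; in particular, if Φ ≤ d then f ≡ 0. -/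
open MeasureTheory Complex

open intervalIntegral Pointwise

namespace Stmt11

/-- Taylor coefficient at 0 of an entire function. -/
noncomputable def cf (g : ℂ → ℂ) (n : ℕ) : ℂ := (cauchyPowerSeries g 0 1).coeff n

lemma coeff_eq_apply_one (p : FormalMultilinearSeries ℂ ℂ ℂ) (n : ℕ) :
    (p n fun _ => 1) = p.coeff n := by
  rw [FormalMultilinearSeries.apply_eq_pow_smul_coeff, one_pow, one_smul]

lemma hasSeriesAt (g : ℂ → ℂ) (hg : Differentiable ℂ g) {R : ℝ} (hR : 0 < R) :
    HasFPowerSeriesAt g (cauchyPowerSeries g 0 R) 0 := by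
  have h := (hg.hasFPowerSeriesOnBall 0 (R := R.toNNReal)
    (Real.toNNReal_pos.mpr hR)).hasFPowerSeriesAt
  rwa [Real.coe_toNNReal _ hR.le] at h

lemma cf_eq_coeff (g : ℂ → ℂ) (hg : Differentiable ℂ g) {R : ℝ} (hR : 0 < R) (n : ℕ) :
    (cauchyPowerSeries g 0 R).coeff n = cf g n := by
  rw [cf, (hasSeriesAt g hg hR).eq_formalMultilinearSeries (hasSeriesAt g hg one_pos)]

lemma expansion (g : ℂ → ℂ) (hg : Differentiable ℂ g) (z : ℂ) :
    g z = ∑' n : ℕ, z ^ n • cf g n := by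
  have h := hg.hasFPowerSeriesOnBall 0 (R := 1) one_pos
  have h2 := h.sum (y := z) (by simp)
  rw [zero_add] at h2
  rw [h2, FormalMultilinearSeries.sum]
  refine tsum_congr fun n => ?_
  rw [FormalMultilinearSeries.apply_eq_pow_smul_coeff]
  norm_num [cf]

lemma expansion_finite (g : ℂ → ℂ) (hg : Differentiable ℂ g) (N : ℕ)
    (hv : ∀ n, N ≤ n → cf g n = 0) (z : ℂ) :
    g z = ∑ n ∈ Finset.range N, z ^ n • cf g n := by
  rw [expansion g hg z]
  exact tsum_eq_sum fun b hb => by rw [hv b (by simpa using hb), smul_zero]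

lemma cf_zero_eq (g : ℂ → ℂ) (hg : Differentiable ℂ g) : cf g 0 = g 0 := by
  have h := (hasSeriesAt g hg one_pos).coeff_zero (fun _ => 1)
  rw [cf, FormalMultilinearSeries.coeff, ← h]
  congr

lemma norm_cf_le (g : ℂ → ℂ) (hg : Differentiable ℂ g) {R : ℝ} (hR : 0 < R) (n : ℕ) :
    ‖cf g n‖ ≤ ((2 * Real.pi)⁻¹ * ∫ θ in (0)..(2*Real.pi), ‖g (circleMap 0 R θ)‖) * R⁻¹ ^ n := by
  rw [← cf_eq_coeff g hg hR n, ← coeff_eq_apply_one]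
  calc ‖cauchyPowerSeries g 0 R n fun _ => 1‖
      ≤ ‖cauchyPowerSeries g 0 R n‖ * ∏ _i : Fin n, ‖(1:ℂ)‖ :=
        (cauchyPowerSeries g 0 R n).le_opNorm _
    _ = ‖cauchyPowerSeries g 0 R n‖ := by simp
    _ ≤ _ := by simpa [abs_of_pos hR] using norm_cauchyPowerSeries_le g 0 R n

lemma norm_cf_le_sup (g : ℂ → ℂ) (hg : Differentiable ℂ g) {R C : ℝ} (hR : 0 < R)
    (hb : ∀ θ : ℝ, ‖g (circleMap 0 R θ)‖ ≤ C) (n : ℕ) : ‖cf g n‖ ≤ C * R⁻¹ ^ n := by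
  have hC : 0 ≤ C := le_trans (norm_nonneg _) (hb 0)
  have hint : IntervalIntegrable (fun θ : ℝ => ‖g (circleMap 0 R θ)‖) volume 0 (2*Real.pi) :=
    ((hg.continuous.comp (continuous_circleMap 0 R)).norm).intervalIntegrable _ _
  have h1 : ∫ θ in (0)..(2*Real.pi), ‖g (circleMap 0 R θ)‖ ≤ (2*Real.pi) * C := by
    have := intervalIntegral.integral_mono_on (by positivity : (0:ℝ) ≤ 2*Real.pi) hint
      (intervalIntegrable_const) (fun θ _ => hb θ)
    simpa [smul_eq_mul, mul_comm] using this
  refine le_trans (norm_cf_le g hg hR n) ?_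
  have h2 : (2 * Real.pi)⁻¹ * ∫ θ in (0)..(2*Real.pi), ‖g (circleMap 0 R θ)‖ ≤ C := by
    rw [inv_mul_le_iff₀ (by positivity)]
    linarith [h1]
  exact mul_le_mul_of_nonneg_right h2 (by positivity)

lemma cf_eq_zero_of_growth (g : ℂ → ℂ) (hg : Differentiable ℂ g) (C : ℝ) (M : ℕ)
    (hb : ∀ z, ‖g z‖ ≤ C * (1 + ‖z‖) ^ M) {n : ℕ} (hn : M < n) : cf g n = 0 := by
  have hC : 0 ≤ C := by
    have := le_trans (norm_nonneg _) (hb 0)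
    nlinarith [pow_pos (by norm_num : (0:ℝ) < 1 + ‖(0:ℂ)‖) M]
  set A := C * 2 ^ M with hA
  have hA0 : 0 ≤ A := by positivity
  have key : ∀ R : ℝ, 1 ≤ R → ‖cf g n‖ ≤ A * R⁻¹ := by
    intro R hR
    have h0 : (0:ℝ) < R := lt_of_lt_of_le one_pos hR
    have hbd : ∀ θ : ℝ, ‖g (circleMap 0 R θ)‖ ≤ C * (2*R) ^ M := by
      intro θ
      refine (hb _).trans ?_
      have : ‖circleMap 0 R θ‖ = R := by
        simpa [abs_of_pos h0] using norm_circleMap_zero R θ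
      rw [this]
      have : (1 + R) ≤ 2 * R := by linarith
      exact mul_le_mul_of_nonneg_left (pow_le_pow_left₀ (by linarith) this M) hC
    have h2 := norm_cf_le_sup g hg h0 hbd n
    refine h2.trans ?_
    have hRin : R⁻¹ ≤ 1 := by
      rw [inv_le_one_iff₀]; right; exact hR
    have hRi0 : 0 ≤ R⁻¹ := by positivity
    calc C * (2*R) ^ M * R⁻¹ ^ n = A * (R ^ M * R⁻¹ ^ n) := by rw [hA, mul_pow]; ring
      _ = A * R⁻¹ ^ (n - M) := by
          congr 1
          have h3 : n = M + (n - M) := by omega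
          nth_rewrite 1 [h3]
          rw [pow_add, ← mul_assoc]
          have : R ^ M * R⁻¹ ^ M = 1 := by
            rw [← mul_pow, mul_inv_cancel₀ h0.ne', one_pow]
          rw [this, one_mul]
      _ ≤ A * R⁻¹ := by
          have h4 : 1 ≤ n - M := by omega
          have := pow_le_pow_of_le_one hRi0 hRin h4
          rw [pow_one] at this
          exact mul_le_mul_of_nonneg_left this hA0
  have : ‖cf g n‖ ≤ 0 := by
    refine le_of_forall_pos_le_add fun ε hε => ?_
    rcases eq_or_lt_of_le hA0 with hA' | hA'
    · have := key 1 le_rfl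
      rw [← hA'] at this; simpa using le_trans this (by linarith)
    · have hR1 : (1:ℝ) ≤ max 1 (A / ε) := le_max_left _ _
      have := key _ hR1
      refine le_trans this ?_
      have h5 : A / ε ≤ max 1 (A / ε) := le_max_right _ _
      have h6 : (0:ℝ) < max 1 (A / ε) := lt_of_lt_of_le one_pos hR1
      rw [zero_add]
      calc A * (max 1 (A / ε))⁻¹ ≤ A * (A / ε)⁻¹ := by
            apply mul_le_mul_of_nonneg_left _ hA0
            exact inv_anti₀ (by positivity) h5
        _ = ε := by field_simp
  exact norm_le_zero_iff.mp this

lemma eval_toMv {d : ℕ} (x : Fin d → ℂ) (B : Polynomial ℂ) (j : Fin d) :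
    MvPolynomial.eval x (Polynomial.eval₂ MvPolynomial.C (MvPolynomial.X j) B)
      = B.eval (x j) := by
  rw [Polynomial.hom_eval₂]
  have h1 : (MvPolynomial.eval x).comp (MvPolynomial.C : ℂ →+* MvPolynomial (Fin d) ℂ)
      = RingHom.id ℂ := RingHom.ext fun a => by simp
  rw [h1, MvPolynomial.eval_X]
  rfl

theorem poly_of_growth (d : ℕ) : ∀ (f : (Fin d → ℂ) → ℂ), Differentiable ℂ f →
    ∀ (C : ℝ) (M : ℕ), 0 ≤ C → (∀ x, ‖f x‖ ≤ C * (1 + ‖x‖) ^ M) →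
    ∃ p : MvPolynomial (Fin d) ℂ, ∀ x, f x = MvPolynomial.eval x p := by
  induction d with
  | zero =>
    intro f hf C M hC hb
    exact ⟨MvPolynomial.C (f 0), fun x => by
      rw [MvPolynomial.eval_C]; exact congrArg f (Subsingleton.elim x 0)⟩
  | succ d IH =>
    intro f hf C M hC hb
    -- differentiability of slices in the first variable
    have hconsd : ∀ x' : Fin d → ℂ, Differentiable ℂ (fun t : ℂ => f (Fin.cons t x')) := by
      intro x'
      have heq : (fun t : ℂ => (Fin.cons t x' : Fin (d+1) → ℂ))
          = fun t : ℂ => t • (Fin.cons 1 0 : Fin (d+1) → ℂ) + (Fin.cons 0 x') := by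
        funext t j
        refine Fin.cases ?_ (fun i => ?_) j <;> simp
      have : Differentiable ℂ (fun t : ℂ => (Fin.cons t x' : Fin (d+1) → ℂ)) := by
        rw [heq]
        exact (differentiable_id.smul_const _).add_const _
      exact hf.comp this
    -- norm bound for cons
    have hncons : ∀ (t : ℂ) (x' : Fin d → ℂ), ‖(Fin.cons t x' : Fin (d+1) → ℂ)‖ ≤ ‖t‖ + ‖x'‖ := by
      intro t x'
      rw [pi_norm_le_iff_of_nonneg (by positivity)]
      intro j
      refine Fin.cases ?_ (fun i => ?_) j
      · simp [le_add_of_nonneg_right (norm_nonneg _)]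
      · simpa using le_add_of_nonneg_left (α := ℝ) (norm_nonneg t) |>.trans
          (by gcongr; exact norm_le_pi_norm x' i)
    -- growth of slices
    have ht : ∀ (x' : Fin d → ℂ) (t : ℂ),
        ‖f (Fin.cons t x')‖ ≤ (C * (1 + ‖x'‖) ^ M) * (1 + ‖t‖) ^ M := by
      intro x' t
      refine (hb _).trans ?_
      rw [mul_assoc, ← mul_pow]
      refine mul_le_mul_of_nonneg_left (pow_le_pow_left₀ (by positivity) ?_ M) hC
      have := hncons t x'
      nlinarith [norm_nonneg t, norm_nonneg x']
    -- coefficients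
    set ck : ℕ → (Fin d → ℂ) → ℂ := fun k x' => cf (fun t => f (Fin.cons t x')) k with hck
    have hvan : ∀ (x' : Fin d → ℂ) (k : ℕ), M < k → ck k x' = 0 := by
      intro x' k hk
      exact cf_eq_zero_of_growth _ (hconsd x') _ M (ht x') hk
    have hexp : ∀ (x' : Fin d → ℂ) (t : ℂ),
        f (Fin.cons t x') = ∑ k ∈ Finset.range (M+1), t ^ k • ck k x' := by
      intro x' t
      exact expansion_finite _ (hconsd x') (M+1) (fun n hn => hvan x' n (by omega)) t
    -- Lagrange interpolation
    set v : Fin (M+1) → ℂ := fun i => ((i : ℕ) : ℂ) with hv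
    have hinj : Set.InjOn v (Finset.univ : Finset (Fin (M+1))) := by
      intro i _ j _ h
      exact Fin.val_injective (Nat.cast_injective h)
    set P : (Fin d → ℂ) → Polynomial ℂ :=
      fun x' => ∑ k ∈ Finset.range (M+1), Polynomial.C (ck k x') * Polynomial.X ^ k with hP
    have hPeval : ∀ x' t, (P x').eval t = f (Fin.cons t x') := by
      intro x' t
      rw [hexp x' t, hP]
      simp only [Polynomial.eval_finset_sum, Polynomial.eval_mul, Polynomial.eval_C,
        Polynomial.eval_pow, Polynomial.eval_X, smul_eq_mul]
      exact Finset.sum_congr rfl fun k _ => mul_comm _ _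
    have hPdeg : ∀ x', (P x').degree < (Finset.univ : Finset (Fin (M+1))).card := by
      intro x'
      rw [Finset.card_univ, Fintype.card_fin]
      refine lt_of_le_of_lt (Polynomial.degree_sum_le _ _) ?_
      rw [Finset.sup_lt_iff (by exact_mod_cast WithBot.bot_lt_coe (M+1))]
      intro k hk
      refine lt_of_le_of_lt (Polynomial.degree_C_mul_X_pow_le _ _) ?_
      exact_mod_cast Finset.mem_range.mp hk
    have hinterp : ∀ x' t, f (Fin.cons t x')
        = ∑ i : Fin (M+1), f (Fin.cons (v i) x') * (Lagrange.basis Finset.univ v i).eval t := by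
      intro x' t
      have h2 := Lagrange.eq_interpolate hinj (hPdeg x')
      calc f (Fin.cons t x') = (P x').eval t := (hPeval x' t).symm
        _ = (Lagrange.interpolate Finset.univ v (fun i => (P x').eval (v i))).eval t := by
            rw [← h2]
        _ = _ := by
            rw [Lagrange.interpolate_apply, Polynomial.eval_finset_sum]
            exact Finset.sum_congr rfl fun i _ => by
              rw [Polynomial.eval_mul, Polynomial.eval_C, hPeval]
    -- slice functions at the nodes
    have hFdiff : ∀ i : Fin (M+1), Differentiable ℂ (fun x' : Fin d → ℂ => f (Fin.cons (v i) x')) := by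
      intro i
      have heq : (fun x' : Fin d → ℂ => (Fin.cons (v i) x' : Fin (d+1) → ℂ))
          = fun x' : Fin d → ℂ => (fun x' : Fin d → ℂ => (Fin.cons 0 x' : Fin (d+1) → ℂ)) x'
            + (Fin.cons (v i) 0 : Fin (d+1) → ℂ) := by
        funext x' j
        refine Fin.cases ?_ (fun l => ?_) j <;> simp
      have hlin : Differentiable ℂ (fun x' : Fin d → ℂ => (Fin.cons 0 x' : Fin (d+1) → ℂ)) := by
        rw [differentiable_pi]
        intro j
        refine Fin.cases ?_ (fun l => ?_) j
        · simp only [Fin.cons_zero]; exact differentiable_const 0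
        · simp only [Fin.cons_succ]; exact differentiable_apply l
      refine hf.comp ?_
      have h5 := hlin.add_const (Fin.cons (v i) 0 : Fin (d+1) → ℂ)
      rwa [← heq] at h5
    have hFgrow : ∀ (i : Fin (M+1)) (x' : Fin d → ℂ),
        ‖f (Fin.cons (v i) x')‖ ≤ (C * (1 + M) ^ M) * (1 + ‖x'‖) ^ M := by
      intro i x'
      refine (hb _).trans ?_
      rw [mul_assoc, ← mul_pow]
      refine mul_le_mul_of_nonneg_left (pow_le_pow_left₀ (by positivity) ?_ M) hC
      have h3 := hncons (v i) x'
      have h4 : ‖v i‖ ≤ (M : ℝ) := by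
        rw [hv]
        simp only [Complex.norm_natCast]
        exact_mod_cast Nat.le_of_lt_succ i.isLt
      nlinarith [norm_nonneg x', norm_nonneg (v i)]
    -- apply IH
    choose ps hps using fun i : Fin (M+1) =>
      IH (fun x' => f (Fin.cons (v i) x')) (hFdiff i) (C * (1 + M) ^ M) M (by positivity)
        (hFgrow i)
    -- assemble
    refine ⟨∑ i : Fin (M+1),
      Polynomial.eval₂ MvPolynomial.C (MvPolynomial.X 0) (Lagrange.basis Finset.univ v i)
        * MvPolynomial.rename Fin.succ (ps i), fun x => ?_⟩
    rw [map_sum]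
    have hx : f x = f (Fin.cons (x 0) (Fin.tail x)) := by rw [Fin.cons_self_tail]
    rw [hx, hinterp (Fin.tail x) (x 0)]
    refine Finset.sum_congr rfl fun i _ => ?_
    rw [map_mul, eval_toMv, MvPolynomial.eval_rename]
    rw [mul_comm]
    congr 1
    exact hps i (Fin.tail x)

lemma cf_smul (g : ℂ → ℂ) (hg : Differentiable ℂ g) {r : ℝ} (hr : 0 < r) (n : ℕ) :
    cf (fun z => g ((r:ℂ) * z)) n = (r:ℂ) ^ n * cf g n := by
  have hrne : (r:ℂ) ≠ 0 := by exact_mod_cast hr.ne'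
  rw [← cf_eq_coeff g hg hr n, cf, ← coeff_eq_apply_one, ← coeff_eq_apply_one,
    cauchyPowerSeries_apply, cauchyPowerSeries_apply]
  have key : (∮ z in C(0, r), (1/(z-0):ℂ)^n • (z-0)⁻¹ • g z)
      = ((r:ℂ)^n)⁻¹ * ∮ z in C(0, (1:ℝ)), (1/(z-0):ℂ)^n • (z-0)⁻¹ • g ((r:ℂ) * z) := by
    rw [circleIntegral, circleIntegral, ← intervalIntegral.integral_const_mul]
    refine intervalIntegral.integral_congr fun θ _ => ?_
    have hE : circleMap 0 r θ = (r:ℂ) * circleMap 0 1 θ := by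
      simp [circleMap]
    have hEne : circleMap 0 1 θ ≠ 0 := by
      have h9 : circleMap 0 1 θ = Complex.exp (θ * I) := by simp [circleMap]
      rw [h9]
      exact Complex.exp_ne_zero _
    rw [deriv_circleMap, deriv_circleMap, hE]
    simp only [smul_eq_mul, sub_zero, one_div]
    field_simp
    have hrr : ((r:ℂ)⁻¹)^n * (r:ℂ)^n = 1 := by rw [← mul_pow, inv_mul_cancel₀ hrne, one_pow]
    linear_combination (g ((r:ℂ) * circleMap 0 1 θ) * ((circleMap 0 1 θ)⁻¹)^n) * hrr
  rw [key]
  simp only [smul_eq_mul]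
  field_simp
  simp_rw [mul_comm _ (r:ℂ)]

lemma cf_sub (g h : ℂ → ℂ) (hg : Differentiable ℂ g) (hh : Differentiable ℂ h) (n : ℕ) :
    cf (fun z => g z - h z) n = cf g n - cf h n := by
  have h1 : HasFPowerSeriesAt (g - h) (cauchyPowerSeries g 0 1 - cauchyPowerSeries h 0 1) 0 := by
    have := ((hg.hasFPowerSeriesOnBall 0 (R := 1) one_pos).sub
      (hh.hasFPowerSeriesOnBall 0 (R := 1) one_pos)).hasFPowerSeriesAt
    simpa using this
  have h2 := hasSeriesAt (g - h) (hg.sub hh) one_pos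
  have h3 : cf (fun z => g z - h z) n = (cauchyPowerSeries (g - h) 0 1).coeff n := rfl
  rw [h3, h2.eq_formalMultilinearSeries h1]
  rfl

variable {d : ℕ}

lemma finrankE : Module.finrank ℝ (EuclideanSpace ℂ (Fin d)) = 2 * d := by
  rw [LinearEquiv.finrank_eq (WithLp.linearEquiv 2 ℝ (∀ _ : Fin d, ℂ)),
    Module.finrank_pi_fintype]
  simp [Complex.finrank_real_complex, Finset.sum_const, mul_comm]

lemma volume_smul_set (c : ℂ) (hc : c ≠ 0) (s : Set (EuclideanSpace ℂ (Fin d)))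
    (hs : MeasurableSet s) :
    volume (c • s) = ENNReal.ofReal (‖c‖ ^ (2*d)) * volume s := by
  set u : ℂ := (‖c‖ : ℂ)⁻¹ * c with hu
  have hcn : (0:ℝ) < ‖c‖ := norm_pos_iff.mpr hc
  have hu0 : u ≠ 0 := by
    rw [hu]
    exact mul_ne_zero (inv_ne_zero (by exact_mod_cast hcn.ne')) hc
  have hnu : ‖u‖ = 1 := by
    rw [hu, norm_mul, norm_inv, Complex.norm_real, Real.norm_eq_abs, abs_of_pos hcn]
    exact inv_mul_cancel₀ hcn.ne'
  have hnuinv : ‖u⁻¹‖ = 1 := by rw [norm_inv, hnu, inv_one]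
  let rot : EuclideanSpace ℂ (Fin d) ≃ₗᵢ[ℝ] EuclideanSpace ℂ (Fin d) :=
    { toLinearEquiv := (LinearEquiv.smulOfNeZero ℂ _ u⁻¹ (inv_ne_zero hu0)).restrictScalars ℝ
      norm_map' := fun x => by
        show ‖u⁻¹ • x‖ = ‖x‖
        rw [norm_smul, hnuinv, one_mul] }
  have hrot : volume (u • s) = volume s := by
    have h1 : (fun x : EuclideanSpace ℂ (Fin d) => u⁻¹ • x) ⁻¹' s = u • s := by
      rw [Set.preimage_smul₀ (inv_ne_zero hu0), inv_inv]
    have h2 := rot.measurePreserving.measure_preimage hs.nullMeasurableSet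
    have h3 : ⇑rot = fun x : EuclideanSpace ℂ (Fin d) => u⁻¹ • x := rfl
    rw [h3, h1] at h2
    exact h2
  have hx : ∀ x : EuclideanSpace ℂ (Fin d), (‖c‖:ℝ) • (u • x) = c • x := by
    intro x
    rw [← smul_assoc]
    congr 1
    show (‖c‖:ℝ) • u = c
    rw [Complex.real_smul, hu]
    rw [← mul_assoc, mul_inv_cancel₀ (by exact_mod_cast hcn.ne'), one_mul]
  have hset : c • s = (‖c‖:ℝ) • (u • s) := by
    calc c • s = (fun x => c • x) '' s := (Set.image_smul).symm
      _ = (fun x => (‖c‖:ℝ) • x) '' ((fun x => u • x) '' s) := by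
          rw [Set.image_image]
          exact Set.image_congr fun x _ => (hx x).symm
      _ = (‖c‖:ℝ) • (u • s) := by rw [Set.image_smul, Set.image_smul]
  rw [hset, Measure.addHaar_smul, finrankE, hrot,
    _root_.abs_of_nonneg (by positivity : (0:ℝ) ≤ ‖c‖ ^ (2*d))]

lemma lintegral_comp_smul (c : ℂ) (hc : c ≠ 0) (G : EuclideanSpace ℂ (Fin d) → ENNReal)
    (hG : Measurable G) :
    ∫⁻ w, G (c • w) = (ENNReal.ofReal (‖c‖ ^ (2*d)))⁻¹ * ∫⁻ z, G z := by
  have hcn : (0:ℝ) < ‖c‖ := norm_pos_iff.mpr hc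
  have hmap : Measure.map (fun w : EuclideanSpace ℂ (Fin d) => c • w) volume
      = (ENNReal.ofReal (‖c‖ ^ (2*d)))⁻¹ • volume := by
    refine Measure.ext fun s hs => ?_
    rw [Measure.map_apply (continuous_const_smul c).measurable hs, Set.preimage_smul₀ hc,
      volume_smul_set _ (inv_ne_zero hc) s hs, Measure.smul_apply, smul_eq_mul]
    congr 1
    rw [norm_inv, inv_pow, ENNReal.ofReal_inv_of_pos (by positivity)]
  rw [← lintegral_map hG (continuous_const_smul c).measurable, hmap, lintegral_smul_measure, smul_eq_mul]

lemma setLIntegral_comp_smul (c : ℂ) (hc : c ≠ 0) (G : EuclideanSpace ℂ (Fin d) → ENNReal)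
    (hG : Measurable G) (U : Set (EuclideanSpace ℂ (Fin d))) (hU : MeasurableSet U) :
    ∫⁻ w in U, G (c • w) = (ENNReal.ofReal (‖c‖ ^ (2*d)))⁻¹ * ∫⁻ z in c • U, G z := by
  have hcU : MeasurableSet (c • U) := by
    rw [← inv_inv c, ← Set.preimage_smul₀ (inv_ne_zero hc)]
    exact (continuous_const_smul _).measurable hU
  rw [← lintegral_indicator hU, ← lintegral_indicator hcU]
  have hind : (U.indicator fun w => G (c • w)) = fun w => (c • U).indicator G (c • w) := by
    funext w
    by_cases hw : w ∈ U
    · rw [Set.indicator_of_mem hw, Set.indicator_of_mem (Set.smul_mem_smul_set hw)]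
    · rw [Set.indicator_of_notMem hw, Set.indicator_of_notMem
        (fun hmem => hw ((Set.smul_mem_smul_set_iff₀ hc U w).mp hmem))]
  rw [hind, lintegral_comp_smul c hc _ (hG.indicator hcU)]

variable {d : ℕ}

noncomputable def qq (f : EuclideanSpace ℂ (Fin d) → ℂ) (n : ℕ)
    (w : EuclideanSpace ℂ (Fin d)) : ℂ := cf (fun l : ℂ => f (l • w)) n

lemma gdiff (f : EuclideanSpace ℂ (Fin d) → ℂ) (hf : Differentiable ℂ f)
    (w : EuclideanSpace ℂ (Fin d)) : Differentiable ℂ (fun l : ℂ => f (l • w)) :=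
  hf.comp (differentiable_id.smul_const w)

lemma coe_real_smul (r : ℝ) (w : EuclideanSpace ℂ (Fin d)) : ((r:ℂ)) • w = r • w := by
  have h1 : (r:ℂ) = r • (1:ℂ) := by rw [Complex.real_smul, mul_one]
  rw [h1, smul_assoc, one_smul]

lemma qq_smul (f : EuclideanSpace ℂ (Fin d) → ℂ) (hf : Differentiable ℂ f)
    {r : ℝ} (hr : 0 < r) (n : ℕ) (w : EuclideanSpace ℂ (Fin d)) :
    qq f n (r • w) = (r:ℂ)^n * qq f n w := by
  have heq : (fun l : ℂ => f (l • (r • w))) = fun l : ℂ => (fun m : ℂ => f (m • w)) ((r:ℂ) * l) := by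
    funext l
    congr 1
    rw [← coe_real_smul, smul_smul, mul_comm]
  rw [qq, heq, cf_smul _ (gdiff f hf w) hr n]
  rfl

lemma qq_zero (f : EuclideanSpace ℂ (Fin d) → ℂ) (hf : Differentiable ℂ f)
    {n : ℕ} (hn : n ≠ 0) : qq f n 0 = 0 := by
  have h := qq_smul f hf (r := 2) two_pos n 0
  rw [smul_zero] at h
  push_cast at h
  have h2 : ((2:ℂ)^n - 1) * qq f n 0 = 0 := by rw [sub_mul, one_mul, ← h, sub_self]
  rcases mul_eq_zero.mp h2 with h3 | h3
  · exfalso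
    have h4 : ((2:ℂ))^n = 1 := by
      have := sub_eq_zero.mp h3
      simpa using this
    have h5 := congrArg norm h4
    rw [norm_pow, Complex.norm_two, norm_one] at h5
    have h6 : (1:ℝ) < 2^n := one_lt_pow₀ one_lt_two hn
    linarith
  · exact h3

lemma qq_zeroth (f : EuclideanSpace ℂ (Fin d) → ℂ) (hf : Differentiable ℂ f)
    (w : EuclideanSpace ℂ (Fin d)) : qq f 0 w = f 0 := by
  rw [qq, cf_zero_eq _ (gdiff f hf w), zero_smul]

lemma qq_diff_bound (f : EuclideanSpace ℂ (Fin d) → ℂ) (hf : Differentiable ℂ f)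
    (n : ℕ) (w w₀ : EuclideanSpace ℂ (Fin d)) {ε : ℝ}
    (hb : ∀ θ : ℝ, ‖f (circleMap 0 1 θ • w) - f (circleMap 0 1 θ • w₀)‖ ≤ ε) :
    ‖qq f n w - qq f n w₀‖ ≤ ε := by
  have h1 : qq f n w - qq f n w₀ = cf (fun l : ℂ => f (l • w) - f (l • w₀)) n :=
    (cf_sub _ _ (gdiff f hf w) (gdiff f hf w₀) n).symm
  rw [h1]
  have h2 := norm_cf_le_sup (fun l : ℂ => f (l • w) - f (l • w₀))
    ((gdiff f hf w).sub (gdiff f hf w₀)) one_pos hb n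
  simpa using h2

lemma qq_norm_le (f : EuclideanSpace ℂ (Fin d) → ℂ) (hf : Differentiable ℂ f)
    {B : ℝ} (hB : ∀ x : EuclideanSpace ℂ (Fin d), ‖x‖ ≤ 1 → ‖f x‖ ≤ B)
    (n : ℕ) (z : EuclideanSpace ℂ (Fin d)) : ‖qq f n z‖ ≤ B * ‖z‖^n := by
  have hB0 : 0 ≤ B := le_trans (norm_nonneg _) (hB 0 (by simp))
  rcases eq_or_ne z 0 with rfl | hz
  · rcases Nat.eq_zero_or_pos n with rfl | hn
    · rw [qq_zeroth f hf]
      simpa using hB 0 (by simp)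
    · rw [qq_zero f hf (by omega)]
      simp [zero_pow (by omega : n ≠ 0)]
  · have hzn : (0:ℝ) < ‖z‖ := norm_pos_iff.mpr hz
    set y := (‖z‖:ℝ)⁻¹ • z with hy
    have hyn : ‖y‖ = 1 := by
      rw [hy, norm_smul, norm_inv, Real.norm_eq_abs, abs_of_pos hzn, inv_mul_cancel₀ hzn.ne']
    have hzy : z = (‖z‖:ℝ) • y := by
      rw [hy, smul_smul, mul_inv_cancel₀ hzn.ne', one_smul]
    have h1 : ‖qq f n y‖ ≤ B := by
      have h2 := norm_cf_le_sup (fun l : ℂ => f (l • y)) (gdiff f hf y) one_pos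
        (C := B) (fun θ => by
          apply hB
          rw [norm_smul]
          have : ‖circleMap 0 1 θ‖ = 1 := by
            have := norm_circleMap_zero 1 θ
            simpa using this
          rw [this, one_mul, hyn]) n
      simpa [qq] using h2
    calc ‖qq f n z‖ = ‖qq f n ((‖z‖:ℝ) • y)‖ := by rw [← hzy]
      _ = ‖z‖^n * ‖qq f n y‖ := by
          rw [qq_smul f hf hzn n y, norm_mul, norm_pow, Complex.norm_real,
            Real.norm_eq_abs, abs_of_pos hzn]
      _ ≤ ‖z‖^n * B := mul_le_mul_of_nonneg_left h1 (by positivity)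
      _ = B * ‖z‖^n := mul_comm _ _

lemma sq_nnnorm_qq_le (f : EuclideanSpace ℂ (Fin d) → ℂ) (hf : Differentiable ℂ f)
    {R : ℝ} (hR : 0 < R) (n : ℕ) (w : EuclideanSpace ℂ (Fin d)) :
    (‖qq f n w‖₊ : ENNReal)^2 ≤ ENNReal.ofReal ((2*Real.pi)⁻¹ * (R⁻¹^n)^2) *
      ∫⁻ θ in Set.Ioc 0 (2*Real.pi), (‖f ((circleMap 0 R θ) • w)‖₊ : ENNReal)^2 := by
  have hπ : (0:ℝ) < 2*Real.pi := by positivity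
  set g := fun l : ℂ => f (l • w) with hg
  set J := ∫ θ in (0)..(2*Real.pi), ‖g (circleMap 0 R θ)‖ with hJ
  have hJ0 : 0 ≤ J := intervalIntegral.integral_nonneg hπ.le (fun _ _ => norm_nonneg _)
  have h1 : ‖qq f n w‖ ≤ ((2*Real.pi)⁻¹ * R⁻¹^n) * J := by
    have := norm_cf_le g (gdiff f hf w) hR n
    calc ‖qq f n w‖ ≤ ((2*Real.pi)⁻¹ * J) * R⁻¹^n := this
      _ = ((2*Real.pi)⁻¹ * R⁻¹^n) * J := by ring
  have hgc : Continuous fun θ : ℝ => g (circleMap 0 R θ) :=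
    hf.continuous.comp ((continuous_circleMap 0 R).smul continuous_const)
  have h3 : ENNReal.ofReal J = ∫⁻ θ in Set.Ioc 0 (2*Real.pi),
      (‖g (circleMap 0 R θ)‖₊ : ENNReal) := by
    rw [hJ, intervalIntegral.integral_of_le hπ.le]
    rw [ofReal_integral_eq_lintegral_ofReal (hgc.norm.integrableOn_Ioc)
      (Filter.Eventually.of_forall fun _ => norm_nonneg _)]
    exact lintegral_congr fun θ => ofReal_norm _
  set μ := (volume : Measure ℝ).restrict (Set.Ioc 0 (2*Real.pi)) with hμ
  set h := fun θ : ℝ => (‖g (circleMap 0 R θ)‖₊ : ENNReal) with hh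
  have hcont2 : Continuous h := ENNReal.continuous_coe.comp hgc.nnnorm
  have hmeas : AEMeasurable h μ := hcont2.measurable.aemeasurable
  have hconj : Real.HolderConjugate 2 2 := Real.holderConjugate_iff.mpr ⟨one_lt_two, by norm_num⟩
  have hhol := ENNReal.lintegral_mul_le_Lp_mul_Lq μ hconj hmeas aemeasurable_const
    (g := fun _ => (1:ENNReal))
  simp only [Pi.mul_apply, mul_one, ENNReal.one_rpow] at hhol
  have hμuniv : μ Set.univ = ENNReal.ofReal (2*Real.pi) := by
    rw [hμ, Measure.restrict_apply_univ, Real.volume_Ioc, sub_zero]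
  rw [lintegral_const, hμuniv, one_mul] at hhol
  -- hhol : ∫⁻ h ∂μ ≤ (∫⁻ h^(2:ℝ) ∂μ)^(1/2) * (ofReal (2π))^(1/2)
  have hsq : (∫⁻ θ, h θ ∂μ)^2 ≤ (∫⁻ θ, (h θ)^2 ∂μ) * ENNReal.ofReal (2*Real.pi) := by
    calc (∫⁻ θ, h θ ∂μ)^2
        ≤ ((∫⁻ θ, (h θ)^(2:ℝ) ∂μ)^(1/2:ℝ) * (ENNReal.ofReal (2*Real.pi))^(1/2:ℝ))^2 := by
          exact pow_le_pow_left' hhol 2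
      _ = (∫⁻ θ, (h θ)^(2:ℝ) ∂μ) * ENNReal.ofReal (2*Real.pi) := by
          rw [mul_pow, ← ENNReal.rpow_natCast (_ ^ (1/2:ℝ)) 2,
            ← ENNReal.rpow_natCast ((ENNReal.ofReal (2*Real.pi)) ^ (1/2:ℝ)) 2,
            ← ENNReal.rpow_mul, ← ENNReal.rpow_mul]
          norm_num
      _ = (∫⁻ θ, (h θ)^2 ∂μ) * ENNReal.ofReal (2*Real.pi) := by
          congr 1
          exact lintegral_congr fun θ => by rw [← ENNReal.rpow_natCast (h θ) 2]; norm_num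
  have h2 : (‖qq f n w‖₊ : ENNReal) ≤ ENNReal.ofReal ((2*Real.pi)⁻¹ * R⁻¹^n) * ∫⁻ θ, h θ ∂μ := by
    rw [← h3, ← ENNReal.ofReal_mul (by positivity), ← enorm_eq_nnnorm, ← ofReal_norm]
    exact ENNReal.ofReal_le_ofReal h1
  calc (‖qq f n w‖₊ : ENNReal)^2
      ≤ (ENNReal.ofReal ((2*Real.pi)⁻¹ * R⁻¹^n) * ∫⁻ θ, h θ ∂μ)^2 := pow_le_pow_left' h2 2
    _ = (ENNReal.ofReal ((2*Real.pi)⁻¹ * R⁻¹^n))^2 * (∫⁻ θ, h θ ∂μ)^2 := mul_pow _ _ _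
    _ ≤ (ENNReal.ofReal ((2*Real.pi)⁻¹ * R⁻¹^n))^2 *
        ((∫⁻ θ, (h θ)^2 ∂μ) * ENNReal.ofReal (2*Real.pi)) := mul_le_mul_right hsq _
    _ = ((ENNReal.ofReal ((2*Real.pi)⁻¹ * R⁻¹^n))^2 * ENNReal.ofReal (2*Real.pi)) *
        (∫⁻ θ, (h θ)^2 ∂μ) := by ring
    _ = ENNReal.ofReal ((2*Real.pi)⁻¹ * (R⁻¹^n)^2) * ∫⁻ θ, (h θ)^2 ∂μ := by
        congr 1
        rw [← ENNReal.ofReal_pow (by positivity), ← ENNReal.ofReal_mul (by positivity)]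
        congr 1
        field_simp

lemma rpow_annulus {Φ R s : ℝ} (hR : 1 ≤ R) (h1 : R ≤ s) (h2 : s ≤ 1 + 2*R) :
    s ^ (2*Φ) ≤ 9^|Φ| * R^(2*Φ) := by
  have hR0 : (0:ℝ) < R := lt_of_lt_of_le one_pos hR
  have hs0 : (0:ℝ) < s := lt_of_lt_of_le hR0 h1
  have h9 : (3:ℝ)^(2:ℝ) = 9 := by
    rw [show (2:ℝ) = ((2:ℕ):ℝ) by norm_num, Real.rpow_natCast]
    norm_num
  rcases le_or_gt 0 Φ with hΦ | hΦ
  · have h3 : s ≤ 3*R := by linarith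
    calc s^(2*Φ) ≤ (3*R)^(2*Φ) := Real.rpow_le_rpow hs0.le h3 (by positivity)
      _ = 3^(2*Φ) * R^(2*Φ) := Real.mul_rpow (by norm_num) hR0.le
      _ = 9^|Φ| * R^(2*Φ) := by
          rw [_root_.abs_of_nonneg hΦ]
          congr 1
          rw [Real.rpow_mul (by norm_num : (0:ℝ) ≤ 3) 2 Φ, h9]
  · calc s^(2*Φ) ≤ R^(2*Φ) := Real.rpow_le_rpow_of_nonpos hR0 h1 (by linarith)
      _ ≤ 9^|Φ| * R^(2*Φ) := le_mul_of_one_le_left (by positivity)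
          (Real.one_le_rpow (by norm_num) (abs_nonneg Φ))

lemma Rpart {R : ℝ} (hR0 : 0 < R) (n dd : ℕ) (Φ : ℝ) :
    R^(2*Φ) * ((R⁻¹^n)^2 * (R^(2*dd))⁻¹) = R^(2*Φ - 2*(n:ℝ) - 2*(dd:ℝ)) := by
  rw [inv_pow, inv_pow, ← pow_mul, ← Real.rpow_natCast R (n*2), ← Real.rpow_natCast R (2*dd),
    ← Real.rpow_neg hR0.le, ← Real.rpow_neg hR0.le, ← Real.rpow_add hR0, ← Real.rpow_add hR0]
  congr 1
  push_cast
  ring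

variable {d : ℕ}

lemma key_vanish (f : EuclideanSpace ℂ (Fin d) → ℂ) (hf : Differentiable ℂ f) (Φ : ℝ)
    (hint : ∫⁻ z, ENNReal.ofReal (‖f z‖ ^ 2 * (1 + ‖z‖) ^ (-(2 * Φ))) < ⊤)
    (n : ℕ) (hn : Φ - d ≤ (n:ℝ)) (w₀ : EuclideanSpace ℂ (Fin d))
    (hw₀ : 1 < ‖w₀‖ ∧ ‖w₀‖ < 2) : qq f n w₀ = 0 := by
  set U : Set (EuclideanSpace ℂ (Fin d)) := {w | 1 < ‖w‖ ∧ ‖w‖ < 2} with hU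
  have hUeq : U = Metric.ball (0 : EuclideanSpace ℂ (Fin d)) 2 ∩
      (Metric.closedBall (0 : EuclideanSpace ℂ (Fin d)) 1)ᶜ := by
    ext w
    simp only [hU, Set.mem_setOf_eq, Set.mem_inter_iff, Metric.mem_ball, Metric.mem_closedBall,
      dist_zero_right, Set.mem_compl_iff, not_le]
    tauto
  have hUopen : IsOpen U := by
    rw [hUeq]
    exact Metric.isOpen_ball.inter Metric.isClosed_closedBall.isOpen_compl
  have hUmeas : MeasurableSet U := hUopen.measurableSet
  set G : EuclideanSpace ℂ (Fin d) → ENNReal := fun z => (‖f z‖₊ : ENNReal)^2 with hG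
  have hGmeas : Measurable G := by
    have hGeq : G = fun z => (((‖f z‖₊)^2 : NNReal) : ENNReal) := by
      funext z
      rw [ENNReal.coe_pow]
    rw [hGeq]
    exact (ENNReal.continuous_coe.comp (hf.continuous.nnnorm.pow 2)).measurable
  set EI : EuclideanSpace ℂ (Fin d) → ENNReal :=
    fun z => ENNReal.ofReal (‖f z‖ ^ 2 * (1 + ‖z‖) ^ (-(2 * Φ))) with hEI
  have hEIcont : Continuous fun z : EuclideanSpace ℂ (Fin d) =>
      ‖f z‖ ^ 2 * (1 + ‖z‖) ^ (-(2 * Φ)) := by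
    refine (hf.continuous.norm.pow 2).mul ?_
    exact (continuous_const.add continuous_norm).rpow_const
      (fun x => Or.inl (show (1:ℝ) + ‖x‖ ≠ 0 by positivity))
  have hEImeas : Measurable EI := hEIcont.measurable.ennreal_ofReal
  set LHS := ∫⁻ w in U, (‖qq f n w‖₊ : ENNReal)^2 with hLHS
  set V : ℕ → Set (EuclideanSpace ℂ (Fin d)) :=
    fun k => {z | (2:ℝ)^k < ‖z‖ ∧ ‖z‖ < 2*(2:ℝ)^k} with hV
  have hVmeas : ∀ k, MeasurableSet (V k) := by
    intro k
    have : V k = Metric.ball (0 : EuclideanSpace ℂ (Fin d)) (2*(2:ℝ)^k) ∩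
        (Metric.closedBall (0 : EuclideanSpace ℂ (Fin d)) ((2:ℝ)^k))ᶜ := by
      ext z
      simp only [hV, Set.mem_setOf_eq, Set.mem_inter_iff, Metric.mem_ball, Metric.mem_closedBall,
        dist_zero_right, Set.mem_compl_iff, not_le]
      tauto
    rw [this]
    exact (Metric.isOpen_ball.inter Metric.isClosed_closedBall.isOpen_compl).measurableSet
  set T : ℕ → ENNReal := fun k => ∫⁻ z in V k, EI z with hT
  -- Step A
  have stepA : ∀ k : ℕ, LHS ≤ ENNReal.ofReal (9^|Φ|) * T k := by
    intro k
    set R := (2:ℝ)^k with hR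
    have hR1 : (1:ℝ) ≤ R := one_le_pow₀ one_le_two
    have hR0 : (0:ℝ) < R := lt_of_lt_of_le one_pos hR1
    have hiff1 : ∀ x : ℝ, (1 < R⁻¹ * x ↔ R < x) := by
      intro x
      constructor
      · intro hx
        have := (mul_lt_mul_iff_right₀ hR0).mpr hx
        rwa [mul_one, ← mul_assoc, mul_inv_cancel₀ hR0.ne', one_mul] at this
      · intro hx
        have := (mul_lt_mul_iff_right₀ (inv_pos.mpr hR0)).mpr hx
        rwa [inv_mul_cancel₀ hR0.ne'] at this
    have hiff2 : ∀ x : ℝ, (R⁻¹ * x < 2 ↔ x < 2*R) := by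
      intro x
      constructor
      · intro hx
        have := (mul_lt_mul_iff_right₀ hR0).mpr hx
        rwa [← mul_assoc, mul_inv_cancel₀ hR0.ne', one_mul, mul_comm R 2] at this
      · intro hx
        have := (mul_lt_mul_iff_right₀ (inv_pos.mpr hR0)).mpr hx
        rwa [mul_comm 2 R, ← mul_assoc, inv_mul_cancel₀ hR0.ne', one_mul] at this
    have hA1 : LHS ≤ ENNReal.ofReal ((2*Real.pi)⁻¹ * (R⁻¹^n)^2) *
        ∫⁻ w in U, ∫⁻ θ in Set.Ioc 0 (2*Real.pi),
          (‖f ((circleMap 0 R θ) • w)‖₊ : ENNReal)^2 := by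
      rw [hLHS, ← lintegral_const_mul' _ _ ENNReal.ofReal_ne_top]
      exact lintegral_mono fun w => sq_nnnorm_qq_le f hf hR0 n w
    have hFmeas : Measurable (Function.uncurry fun (w : EuclideanSpace ℂ (Fin d)) (θ : ℝ) =>
        (‖f ((circleMap 0 R θ) • w)‖₊ : ENNReal)^2) := by
      have heq2 : (Function.uncurry fun (w : EuclideanSpace ℂ (Fin d)) (θ : ℝ) =>
          (‖f ((circleMap 0 R θ) • w)‖₊ : ENNReal)^2)
          = fun p : (EuclideanSpace ℂ (Fin d)) × ℝ =>
            (((‖f ((circleMap 0 R p.2) • p.1)‖₊)^2 : NNReal) : ENNReal) := by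
        funext p
        rw [ENNReal.coe_pow]
        rfl
      rw [heq2]
      exact (ENNReal.continuous_coe.comp ((hf.continuous.comp
        (((continuous_circleMap 0 R).comp continuous_snd).smul
          continuous_fst)).nnnorm.pow 2)).measurable
    have hswap : (∫⁻ w in U, ∫⁻ θ in Set.Ioc 0 (2*Real.pi),
          (‖f ((circleMap 0 R θ) • w)‖₊ : ENNReal)^2)
        = ∫⁻ θ in Set.Ioc 0 (2*Real.pi), ∫⁻ w in U,
          (‖f ((circleMap 0 R θ) • w)‖₊ : ENNReal)^2 :=
      lintegral_lintegral_swap hFmeas.aemeasurable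
    have hθ : ∀ θ : ℝ, (∫⁻ w in U, (‖f ((circleMap 0 R θ) • w)‖₊ : ENNReal)^2)
        = (ENNReal.ofReal (R^(2*d)))⁻¹ * ∫⁻ z in V k, G z := by
      intro θ
      have hcn : ‖circleMap 0 R θ‖ = R := by
        have := norm_circleMap_zero R θ
        rwa [abs_of_pos hR0] at this
      have hc0 : circleMap 0 R θ ≠ 0 := by
        intro hc
        rw [hc, norm_zero] at hcn
        linarith
      have h5 := setLIntegral_comp_smul (circleMap 0 R θ) hc0 G hGmeas U hUmeas
      have h6 : circleMap 0 R θ • U = V k := by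
        ext z
        rw [Set.mem_smul_set_iff_inv_smul_mem₀ hc0]
        simp only [hU, hV, Set.mem_setOf_eq, norm_smul, norm_inv, hcn]
        rw [hiff1, hiff2]
      rw [← h6]
      rw [hcn] at h5
      exact h5
    have hconst : (∫⁻ θ in Set.Ioc 0 (2*Real.pi), ∫⁻ w in U,
        (‖f ((circleMap 0 R θ) • w)‖₊ : ENNReal)^2)
        = ((ENNReal.ofReal (R^(2*d)))⁻¹ * ∫⁻ z in V k, G z) * ENNReal.ofReal (2*Real.pi) := by
      rw [lintegral_congr hθ, setLIntegral_const, Real.volume_Ioc, sub_zero]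
    have hW : (∫⁻ z in V k, G z) ≤ ENNReal.ofReal (9^|Φ| * R^(2*Φ)) * T k := by
      rw [hT, ← lintegral_const_mul' _ _ ENNReal.ofReal_ne_top]
      refine setLIntegral_mono (hEImeas.const_mul _) ?_
      intro z hz
      obtain ⟨hz1, hz2⟩ := hz
      have hpos : (0:ℝ) < 1 + ‖z‖ := by positivity
      have hGz : G z = ENNReal.ofReal (‖f z‖^2) := by
        show (‖f z‖₊ : ENNReal)^2 = ENNReal.ofReal (‖f z‖^2)
        rw [← enorm_eq_nnnorm, ← ofReal_norm, ← ENNReal.ofReal_pow (norm_nonneg _)]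
      rw [hGz]
      have hsplit : ‖f z‖^2 = (‖f z‖^2 * (1+‖z‖)^(-(2*Φ))) * (1+‖z‖)^(2*Φ) := by
        rw [mul_assoc, ← Real.rpow_add hpos]
        norm_num
      rw [hsplit]
      have hb : (1+‖z‖)^(2*Φ) ≤ 9^|Φ| * R^(2*Φ) :=
        rpow_annulus hR1 (by linarith) (by linarith)
      calc ENNReal.ofReal ((‖f z‖^2 * (1+‖z‖)^(-(2*Φ))) * (1+‖z‖)^(2*Φ))
          ≤ ENNReal.ofReal ((‖f z‖^2 * (1+‖z‖)^(-(2*Φ))) * (9^|Φ| * R^(2*Φ))) :=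
            ENNReal.ofReal_le_ofReal (mul_le_mul_of_nonneg_left hb (by positivity))
        _ = ENNReal.ofReal (9^|Φ| * R^(2*Φ)) * EI z := by
            rw [mul_comm, ENNReal.ofReal_mul (by positivity : (0:ℝ) ≤ 9^|Φ| * R^(2*Φ))]
    have hc2 : ENNReal.ofReal ((2*Real.pi)⁻¹*(R⁻¹^n)^2) * ENNReal.ofReal (2*Real.pi)
        * (ENNReal.ofReal (R^(2*d)))⁻¹ * ENNReal.ofReal (9^|Φ| * R^(2*Φ))
        ≤ ENNReal.ofReal (9^|Φ|) := by
      rw [← ENNReal.ofReal_inv_of_pos (by positivity : (0:ℝ) < R^(2*d)),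
        ← ENNReal.ofReal_mul (by positivity), ← ENNReal.ofReal_mul (by positivity),
        ← ENNReal.ofReal_mul (by positivity)]
      apply ENNReal.ofReal_le_ofReal
      have hRpart : R^(2*Φ) * ((R⁻¹^n)^2 * (R^(2*d))⁻¹) = R^(2*Φ - (2*(n:ℝ)) - (2*(d:ℝ))) :=
        Rpart hR0 n d Φ
      calc (2*Real.pi)⁻¹*(R⁻¹^n)^2 * (2*Real.pi) * (R^(2*d))⁻¹ * (9^|Φ| * R^(2*Φ))
          = ((2*Real.pi)⁻¹ * (2*Real.pi)) * (9^|Φ| * (R^(2*Φ) * ((R⁻¹^n)^2 * (R^(2*d))⁻¹))) := by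
            ring
        _ = 9^|Φ| * R^(2*Φ - (2*(n:ℝ)) - (2*(d:ℝ))) := by
            rw [inv_mul_cancel₀ (by positivity : (2*Real.pi) ≠ 0), one_mul, hRpart]
        _ ≤ 9^|Φ| * 1 := by
            refine mul_le_mul_of_nonneg_left ?_ (by positivity)
            exact Real.rpow_le_one_of_one_le_of_nonpos hR1 (by linarith)
        _ = 9^|Φ| := mul_one _
    calc LHS ≤ ENNReal.ofReal ((2*Real.pi)⁻¹ * (R⁻¹^n)^2) *
        ∫⁻ w in U, ∫⁻ θ in Set.Ioc 0 (2*Real.pi),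
          (‖f ((circleMap 0 R θ) • w)‖₊ : ENNReal)^2 := hA1
      _ = ENNReal.ofReal ((2*Real.pi)⁻¹ * (R⁻¹^n)^2) *
          (((ENNReal.ofReal (R^(2*d)))⁻¹ * ∫⁻ z in V k, G z) * ENNReal.ofReal (2*Real.pi)) := by
            rw [hswap, hconst]
      _ ≤ ENNReal.ofReal ((2*Real.pi)⁻¹ * (R⁻¹^n)^2) *
          (((ENNReal.ofReal (R^(2*d)))⁻¹ * (ENNReal.ofReal (9^|Φ| * R^(2*Φ)) * T k))
            * ENNReal.ofReal (2*Real.pi)) := by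
            gcongr
      _ = (ENNReal.ofReal ((2*Real.pi)⁻¹*(R⁻¹^n)^2) * ENNReal.ofReal (2*Real.pi)
          * (ENNReal.ofReal (R^(2*d)))⁻¹ * ENNReal.ofReal (9^|Φ| * R^(2*Φ))) * T k := by
            ring
      _ ≤ ENNReal.ofReal (9^|Φ|) * T k := mul_le_mul_left hc2 _
  -- Step B
  have stepB : ∀ K : ℕ, ∑ k ∈ Finset.range K, T k ≤ ∫⁻ z, EI z := by
    intro K
    have hdisj : (↑(Finset.range K) : Set ℕ).PairwiseDisjoint V := by
      intro i _ j _ hij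
      refine Set.disjoint_left.mpr fun z hzi hzj => ?_
      rcases lt_or_gt_of_ne hij with h | h
      · have h1 : 2*(2:ℝ)^i ≤ (2:ℝ)^j := by
          have h2 : (2:ℝ)^(i+1) ≤ 2^j := pow_le_pow_right₀ one_le_two (by omega)
          calc 2*(2:ℝ)^i = 2^(i+1) := by rw [pow_succ]; ring
            _ ≤ 2^j := h2
        have h3 := hzi.2
        have h4 := hzj.1
        linarith
      · have h1 : 2*(2:ℝ)^j ≤ (2:ℝ)^i := by
          have h2 : (2:ℝ)^(j+1) ≤ 2^i := pow_le_pow_right₀ one_le_two (by omega)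
          calc 2*(2:ℝ)^j = 2^(j+1) := by rw [pow_succ]; ring
            _ ≤ 2^i := h2
        have h3 := hzj.2
        have h4 := hzi.1
        linarith
    have h7 := lintegral_biUnion_finset (μ := (volume : Measure (EuclideanSpace ℂ (Fin d)))) hdisj (fun k _ => hVmeas k) EI
    rw [← h7]
    exact lintegral_mono' Measure.restrict_le_self le_rfl
  -- Step C
  have hI : (∫⁻ z, EI z) ≠ ⊤ := hint.ne
  have hC : LHS = 0 := by
    by_contra hL0
    set B := ENNReal.ofReal (9^|Φ|) * ∫⁻ z, EI z with hB
    have hBne : B ≠ ⊤ := ENNReal.mul_ne_top ENNReal.ofReal_ne_top hI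
    have hKb : ∀ K : ℕ, (K : ENNReal) * LHS ≤ B := by
      intro K
      calc (K : ENNReal) * LHS = ∑ _k ∈ Finset.range K, LHS := by
            rw [Finset.sum_const, Finset.card_range, nsmul_eq_mul]
        _ ≤ ∑ k ∈ Finset.range K, ENNReal.ofReal (9^|Φ|) * T k :=
            Finset.sum_le_sum fun k _ => stepA k
        _ = ENNReal.ofReal (9^|Φ|) * ∑ k ∈ Finset.range K, T k := by rw [Finset.mul_sum]
        _ ≤ B := mul_le_mul_right (stepB K) _
    obtain ⟨K, hK⟩ := ENNReal.exists_nat_gt (ENNReal.div_lt_top hBne hL0).ne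
    have h8 := (ENNReal.div_lt_iff (Or.inl hL0) (Or.inr hBne)).mp hK
    exact absurd (hKb K) (not_le.mpr h8)
  -- Step D
  by_contra hq0
  have h9 : 0 < ‖qq f n w₀‖ := norm_pos_iff.mpr hq0
  have hcomp : IsCompact (Metric.closedBall (0 : EuclideanSpace ℂ (Fin d)) 3) :=
    isCompact_closedBall _ _
  have huc := hcomp.uniformContinuousOn_of_continuous hf.continuous.continuousOn
  rw [Metric.uniformContinuousOn_iff] at huc
  set ε := ‖qq f n w₀‖/2 with hε
  have hε0 : 0 < ε := by positivity
  obtain ⟨δ, hδ0, hδ⟩ := huc ε hε0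
  set B' := Metric.ball w₀ δ ∩ U with hB'
  have hB'open : IsOpen B' := Metric.isOpen_ball.inter hUopen
  have hB'ne : B'.Nonempty := ⟨w₀, Metric.mem_ball_self hδ0, hw₀⟩
  have hlow : ∀ w ∈ B', ε ≤ ‖qq f n w‖ := by
    intro w hw
    have hwU : 1 < ‖w‖ ∧ ‖w‖ < 2 := hw.2
    have hd1 : ∀ θ:ℝ, ‖f (circleMap 0 1 θ • w) - f (circleMap 0 1 θ • w₀)‖ ≤ ε := by
      intro θ
      have hcm : ‖circleMap 0 1 θ‖ = 1 := by
        have := norm_circleMap_zero 1 θ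
        simpa using this
      have hmem1 : circleMap 0 1 θ • w ∈ Metric.closedBall (0 : EuclideanSpace ℂ (Fin d)) 3 := by
        rw [Metric.mem_closedBall, dist_zero_right, norm_smul, hcm, one_mul]
        linarith [hwU.2]
      have hmem2 : circleMap 0 1 θ • w₀ ∈ Metric.closedBall (0 : EuclideanSpace ℂ (Fin d)) 3 := by
        rw [Metric.mem_closedBall, dist_zero_right, norm_smul, hcm, one_mul]
        linarith [hw₀.2]
      have hdist : dist (circleMap 0 1 θ • w) (circleMap 0 1 θ • w₀) < δ := by
        rw [dist_eq_norm, ← smul_sub, norm_smul, hcm, one_mul, ← dist_eq_norm]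
        exact hw.1
      have := hδ _ hmem1 _ hmem2 hdist
      rw [dist_eq_norm] at this
      exact this.le
    have h2 := qq_diff_bound f hf n w w₀ hd1
    have h3 := abs_norm_sub_norm_le (qq f n w) (qq f n w₀)
    rw [abs_le] at h3
    have h4 := h3.1
    rw [hε] at *
    linarith
  have hvolB' : 0 < volume B' := hB'open.measure_pos volume hB'ne
  have hlb : ENNReal.ofReal (ε^2) * volume B' ≤ LHS := by
    calc ENNReal.ofReal (ε^2) * volume B'
        = ∫⁻ _w in B', ENNReal.ofReal (ε^2) := (setLIntegral_const _ _).symm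
      _ ≤ ∫⁻ w in B', (‖qq f n w‖₊ : ENNReal)^2 := by
          refine lintegral_mono_ae ?_
          rw [ae_restrict_iff' hB'open.measurableSet]
          refine Filter.Eventually.of_forall fun w hw => ?_
          have h5 := hlow w hw
          rw [← enorm_eq_nnnorm, ← ofReal_norm, ← ENNReal.ofReal_pow (norm_nonneg _)]
          exact ENNReal.ofReal_le_ofReal (by nlinarith [norm_nonneg (qq f n w)])
      _ ≤ LHS := lintegral_mono' (Measure.restrict_mono Set.inter_subset_right le_rfl) le_rfl
  rw [hC] at hlb
  have h6 : ENNReal.ofReal (ε^2) * volume B' ≠ 0 := by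
    apply mul_ne_zero
    · exact (ENNReal.ofReal_pos.mpr (by positivity)).ne'
    · exact hvolB'.ne'
  exact h6 (le_antisymm hlb zero_le)

lemma coeff_sumCX (m : ℕ) (a : ℕ → ℂ) (i : ℕ) :
    (∑ k ∈ Finset.range m, Polynomial.C (a k) * Polynomial.X^k).coeff i
      = if i < m then a i else 0 := by
  rw [Polynomial.finset_sum_coeff]
  have h1 : ∀ k ∈ Finset.range m, (Polynomial.C (a k) * Polynomial.X^k).coeff i
      = if k = i then a i else 0 := by
    intro k _
    rw [Polynomial.coeff_C_mul, Polynomial.coeff_X_pow]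
    by_cases h : i = k
    · subst h; simp
    · rw [if_neg h, if_neg (Ne.symm h), mul_zero]
  rw [Finset.sum_congr rfl h1, Finset.sum_ite_eq' (Finset.range m) i (fun _ => a i)]
  by_cases h : i < m
  · rw [if_pos (Finset.mem_range.mpr h), if_pos h]
  · rw [if_neg (fun hc => h (Finset.mem_range.mp hc)), if_neg h]

lemma degree_of_mem_support_homog {d : ℕ} (p : MvPolynomial (Fin d) ℂ) (n : ℕ)
    {m : Fin d →₀ ℕ} (hm : m ∈ (MvPolynomial.homogeneousComponent n p).support) :
    (∑ j, m j) = n := by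
  have hdeg : Finsupp.degree m = n := by
    by_contra hne
    exact (MvPolynomial.mem_support_iff.mp hm)
      (by rw [MvPolynomial.coeff_homogeneousComponent, if_neg hne])
  rw [← hdeg]
  exact (Finset.sum_subset (Finset.subset_univ _)
    (fun j _ hj => Finsupp.notMem_support_iff.mp hj)).symm

lemma eval_homog {d : ℕ} (l : ℂ) (w : Fin d → ℂ) (p : MvPolynomial (Fin d) ℂ) (n : ℕ) :
    MvPolynomial.eval (fun j => l * w j) (MvPolynomial.homogeneousComponent n p)
      = l^n * MvPolynomial.eval w (MvPolynomial.homogeneousComponent n p) := by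
  rw [MvPolynomial.eval_eq, MvPolynomial.eval_eq, Finset.mul_sum]
  refine Finset.sum_congr rfl fun m hm => ?_
  have hdeg := degree_of_mem_support_homog p n hm
  have h2 : ∏ j ∈ m.support, (l * w j)^(m j)
      = (∏ j ∈ m.support, l^(m j)) * ∏ j ∈ m.support, w j^(m j) := by
    rw [← Finset.prod_mul_distrib]
    exact Finset.prod_congr rfl fun j _ => mul_pow _ _ _
  rw [h2, Finset.prod_pow_eq_pow_sum]
  have h3 : (∑ j ∈ m.support, m j) = n := by
    rw [← hdeg]
    exact Finset.sum_subset (Finset.subset_univ _)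
      (fun j _ hj => Finsupp.notMem_support_iff.mp hj)
  rw [h3]
  ring

variable {d : ℕ}

lemma qq_vanish (hd : 1 ≤ d) (f : EuclideanSpace ℂ (Fin d) → ℂ) (hf : Differentiable ℂ f)
    (Φ : ℝ) (hint : ∫⁻ z, ENNReal.ofReal (‖f z‖ ^ 2 * (1 + ‖z‖) ^ (-(2 * Φ))) < ⊤)
    {n : ℕ} (hn : Φ - d ≤ (n:ℝ)) : ∀ w, qq f n w = 0 := by
  intro w
  rcases eq_or_ne w 0 with rfl | hw
  · rcases Nat.eq_zero_or_pos n with rfl | hpos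
    · set w₀ : EuclideanSpace ℂ (Fin d) := (3/2 : ℝ) • EuclideanSpace.single ⟨0, hd⟩ (1:ℂ)
        with hw₀def
      have hw₀ : 1 < ‖w₀‖ ∧ ‖w₀‖ < 2 := by
        rw [hw₀def, norm_smul, EuclideanSpace.norm_single]
        norm_num
      have h1 := key_vanish f hf Φ hint 0 hn w₀ hw₀
      rw [qq_zeroth f hf] at h1 ⊢
      exact h1
    · exact qq_zero f hf (by omega)
  · have hnorm : 0 < ‖w‖ := norm_pos_iff.mpr hw
    set r : ℝ := (3/2) / ‖w‖ with hr
    have hr0 : 0 < r := by positivity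
    have h2 : 1 < ‖r • w‖ ∧ ‖r • w‖ < 2 := by
      rw [norm_smul, Real.norm_eq_abs, abs_of_pos hr0, hr, div_mul_cancel₀ _ hnorm.ne']
      norm_num
    have h3 := key_vanish f hf Φ hint n hn (r • w) h2
    rw [qq_smul f hf hr0 n w] at h3
    rcases mul_eq_zero.mp h3 with h4 | h4
    · exact absurd h4 (pow_ne_zero n (by exact_mod_cast hr0.ne'))
    · exact h4

theorem main_statement (d : ℕ) (hd : 1 ≤ d) (Φ : ℝ)
    (f : EuclideanSpace ℂ (Fin d) → ℂ) (hf : Differentiable ℂ f)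
    (hint : ∫⁻ z, ENNReal.ofReal (‖f z‖ ^ 2 * (1 + ‖z‖) ^ (-(2 * Φ))) < ⊤) :
    (∃ p : MvPolynomial (Fin d) ℂ,
      (∀ m ∈ p.support, ((∑ j, m j : ℕ) : ℝ) < Φ - d) ∧
      ∀ z, f z = MvPolynomial.eval (fun j => z j) p) ∧
    (Φ ≤ (d : ℝ) → ∀ z, f z = 0) := by
  set N := ⌈Φ - (d:ℝ)⌉₊ with hN
  have hvan : ∀ n : ℕ, N ≤ n → ∀ w, qq f n w = 0 := by
    intro n hn
    refine qq_vanish hd f hf Φ hint ?_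
    by_contra h
    push_neg at h
    have h2 := Nat.lt_ceil.mpr h
    omega
  have hfin : ∀ (w : EuclideanSpace ℂ (Fin d)) (l : ℂ),
      f (l • w) = ∑ n ∈ Finset.range N, l^n • qq f n w := by
    intro w l
    exact expansion_finite (fun m : ℂ => f (m • w)) (gdiff f hf w) N
      (fun n hn => hvan n hn w) l
  have hfw : ∀ w, f w = ∑ n ∈ Finset.range N, qq f n w := by
    intro w
    have h3 := hfin w 1
    rw [one_smul] at h3
    simpa using h3
  have hzero : Φ ≤ (d:ℝ) → ∀ z, f z = 0 := by
    intro hΦ z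
    have hN0 : N = 0 := Nat.ceil_eq_zero.mpr (by linarith)
    rw [hfw z, hN0]
    simp
  refine ⟨?_, hzero⟩
  -- growth bound
  obtain ⟨B0, hB0⟩ := (isCompact_closedBall (0 : EuclideanSpace ℂ (Fin d))
    1).exists_bound_of_continuousOn hf.continuous.continuousOn
  set B := max B0 0 with hB
  have hBnn : 0 ≤ B := le_max_right _ _
  have hBb : ∀ x : EuclideanSpace ℂ (Fin d), ‖x‖ ≤ 1 → ‖f x‖ ≤ B := fun x hx =>
    le_trans (hB0 x (by rwa [Metric.mem_closedBall, dist_zero_right])) (le_max_left _ _)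
  have hgrow : ∀ z : EuclideanSpace ℂ (Fin d), ‖f z‖ ≤ ((N:ℝ) * B) * (1 + ‖z‖)^N := by
    intro z
    rw [hfw z]
    calc ‖∑ n ∈ Finset.range N, qq f n z‖
        ≤ ∑ n ∈ Finset.range N, ‖qq f n z‖ := norm_sum_le _ _
      _ ≤ ∑ _n ∈ Finset.range N, B * (1 + ‖z‖)^N := by
          refine Finset.sum_le_sum fun n hn => ?_
          refine (qq_norm_le f hf hBb n z).trans ?_
          refine mul_le_mul_of_nonneg_left ?_ hBnn
          calc ‖z‖^n ≤ (1+‖z‖)^n :=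
                pow_le_pow_left₀ (norm_nonneg z) (by linarith [norm_nonneg z]) n
            _ ≤ (1+‖z‖)^N := pow_le_pow_right₀ (by linarith [norm_nonneg z])
                (Finset.mem_range.mp hn).le
      _ = ((N:ℝ) * B) * (1+‖z‖)^N := by
          rw [Finset.sum_const, Finset.card_range, nsmul_eq_mul]
          ring
  -- transfer to the plain pi type
  set e := PiLp.continuousLinearEquiv 2 ℂ (fun _ : Fin d => ℂ) with he
  set f' : (Fin d → ℂ) → ℂ := fun x => f (e.symm x) with hf'
  have hf'diff : Differentiable ℂ f' := hf.comp e.symm.differentiable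
  have hnormle : ∀ x : Fin d → ℂ, ‖(e.symm x : EuclideanSpace ℂ (Fin d))‖ ≤ d * ‖x‖ := by
    intro x
    rw [EuclideanSpace.norm_eq]
    have h2 : (∑ j, ‖(e.symm x : EuclideanSpace ℂ (Fin d)) j‖^2) ≤ (d:ℝ) * ‖x‖^2 := by
      have h2a : ∀ j : Fin d, ‖(e.symm x : EuclideanSpace ℂ (Fin d)) j‖^2 ≤ ‖x‖^2 := by
        intro j
        have h2b : ‖(e.symm x : EuclideanSpace ℂ (Fin d)) j‖ = ‖x j‖ := rfl
        rw [h2b]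
        have := norm_le_pi_norm x j
        nlinarith [norm_nonneg (x j), norm_nonneg x]
      calc (∑ j, ‖(e.symm x : EuclideanSpace ℂ (Fin d)) j‖^2)
          ≤ ∑ _j : Fin d, ‖x‖^2 := Finset.sum_le_sum fun j _ => h2a j
        _ = (d:ℝ) * ‖x‖^2 := by
            rw [Finset.sum_const, Finset.card_univ, Fintype.card_fin, nsmul_eq_mul]
    have h4 : (d:ℝ) * ‖x‖^2 ≤ ((d:ℝ) * ‖x‖)^2 := by
      have hd1 : (1:ℝ) ≤ d := by exact_mod_cast hd
      nlinarith [norm_nonneg x]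
    calc Real.sqrt (∑ j, ‖(e.symm x : EuclideanSpace ℂ (Fin d)) j‖^2)
        ≤ Real.sqrt (((d:ℝ) * ‖x‖)^2) := Real.sqrt_le_sqrt (le_trans h2 h4)
      _ = (d:ℝ) * ‖x‖ := Real.sqrt_sq (by positivity)
  have hCnn : (0:ℝ) ≤ ((N:ℝ) * B) * (1+(d:ℝ))^N := by positivity
  have hf'grow : ∀ x, ‖f' x‖ ≤ (((N:ℝ)*B) * (1+(d:ℝ))^N) * (1 + ‖x‖)^N := by
    intro x
    refine (hgrow (e.symm x)).trans ?_
    have hbase : (1 + ‖(e.symm x : EuclideanSpace ℂ (Fin d))‖) ≤ (1+(d:ℝ))*(1+‖x‖) := by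
      have h5 := hnormle x
      nlinarith [norm_nonneg x, (show (0:ℝ) ≤ d by positivity)]
    calc ((N:ℝ)) * B * (1 + ‖(e.symm x : EuclideanSpace ℂ (Fin d))‖)^N
        ≤ ((N:ℝ)) * B * ((1+(d:ℝ))*(1+‖x‖))^N :=
          mul_le_mul_of_nonneg_left (pow_le_pow_left₀ (by positivity) hbase N)
            (by positivity)
      _ = (((N:ℝ)*B) * (1+(d:ℝ))^N) * (1+‖x‖)^N := by rw [mul_pow]; ring
  obtain ⟨p₀, hp₀⟩ := poly_of_growth d f' hf'diff (((N:ℝ)*B) * (1+(d:ℝ))^N) N hCnn hf'grow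
  have hp₀f : ∀ z : EuclideanSpace ℂ (Fin d),
      f z = MvPolynomial.eval (fun j => z j) p₀ := by
    intro z
    have h5 := hp₀ (e z)
    have h6 : e.symm (e z) = z := e.symm_apply_apply z
    rw [hf'] at h5
    simp only [h6] at h5
    convert h5 using 2
    rfl
  set D := p₀.totalDegree with hD
  set K := max (D+1) N with hK
  have hdecomp : (∑ i ∈ Finset.range K, MvPolynomial.homogeneousComponent i p₀) = p₀ := by
    conv_rhs => rw [← MvPolynomial.sum_homogeneousComponent p₀]
    refine (Finset.sum_subset (Finset.range_subset_range.mpr (le_max_left (D+1) N))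
      (fun i _ hi => ?_)).symm
    refine MvPolynomial.homogeneousComponent_eq_zero i p₀ ?_
    have h13 : ¬ i < D + 1 := fun hc => hi (Finset.mem_range.mpr hc)
    omega
  have hhc : ∀ (w : EuclideanSpace ℂ (Fin d)) (i : ℕ), i < K →
      MvPolynomial.eval (fun j => w j) (MvPolynomial.homogeneousComponent i p₀)
        = (if i < N then qq f i w else 0) := by
    intro w i hiK
    set P1 : Polynomial ℂ := ∑ k ∈ Finset.range K,
      Polynomial.C (MvPolynomial.eval (fun j => w j)
        (MvPolynomial.homogeneousComponent k p₀)) * Polynomial.X^k with hP1def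
    set P2 : Polynomial ℂ := ∑ k ∈ Finset.range N,
      Polynomial.C (qq f k w) * Polynomial.X^k with hP2def
    have heval : ∀ l : ℂ, P1.eval l = P2.eval l := by
      intro l
      have hP1 : P1.eval l = MvPolynomial.eval (fun j => l * w j) p₀ := by
        conv_rhs => rw [← hdecomp]
        rw [map_sum, hP1def, Polynomial.eval_finset_sum]
        refine Finset.sum_congr rfl fun k _ => ?_
        rw [Polynomial.eval_mul, Polynomial.eval_C, Polynomial.eval_pow, Polynomial.eval_X,
          eval_homog l (fun j => w j) p₀ k]
        ring
      have hP2 : P2.eval l = f (l • w) := by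
        rw [hfin w l, hP2def, Polynomial.eval_finset_sum]
        refine Finset.sum_congr rfl fun k _ => ?_
        rw [Polynomial.eval_mul, Polynomial.eval_C, Polynomial.eval_pow, Polynomial.eval_X,
          smul_eq_mul, mul_comm]
      rw [hP1, hP2]
      have h7 := hp₀f (l • w)
      have h8 : (fun j => (l • w) j) = fun j => l * w j := rfl
      rw [h8] at h7
      exact h7.symm
    have hPeq : P1 = P2 := Polynomial.funext heval
    have hco1 : P1.coeff i = MvPolynomial.eval (fun j => w j)
        (MvPolynomial.homogeneousComponent i p₀) := by
      rw [hP1def, coeff_sumCX, if_pos hiK]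
    have hco2 : P2.coeff i = if i < N then qq f i w else 0 := by
      rw [hP2def, coeff_sumCX]
    rw [← hco1, hPeq, hco2]
  refine ⟨∑ n ∈ Finset.range N, MvPolynomial.homogeneousComponent n p₀, ?_, ?_⟩
  · intro m hm
    have h9 := MvPolynomial.support_sum hm
    rw [Finset.mem_biUnion] at h9
    obtain ⟨n, hnN, hmn⟩ := h9
    have h10 := degree_of_mem_support_homog p₀ n hmn
    rw [h10]
    exact Nat.lt_ceil.mp (Finset.mem_range.mp hnN)
  · intro z
    rw [map_sum]
    have h11 : ∀ n ∈ Finset.range N,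
        MvPolynomial.eval (fun j => z j) (MvPolynomial.homogeneousComponent n p₀)
          = qq f n z := by
      intro n hn
      have h12 := hhc z n (lt_of_lt_of_le (Finset.mem_range.mp hn) (le_max_right (D+1) N))
      rw [if_pos (Finset.mem_range.mp hn)] at h12
      exact h12
    rw [Finset.sum_congr rfl h11]
    exact hfw z

end Stmt11

/-- If `f` is entire on `ℂ^d` and `∫ |f|²(1+|z|)^{-2Φ} dλ < ∞`, then `f` is a polynomial
in `z¹,…,z^d` of total degree strictly less than `Φ - d`; in particular, if `Φ ≤ d`
then `f ≡ 0`. -/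
theorem statement_11 (d : ℕ) (hd : 1 ≤ d) (Φ : ℝ)
    (f : EuclideanSpace ℂ (Fin d) → ℂ) (hf : Differentiable ℂ f)
    (hint : ∫⁻ z, ENNReal.ofReal (‖f z‖ ^ 2 * (1 + ‖z‖) ^ (-(2 * Φ))) < ⊤) :
    (∃ p : MvPolynomial (Fin d) ℂ,
      (∀ m ∈ p.support, ((∑ j, m j : ℕ) : ℝ) < Φ - d) ∧
      ∀ z, f z = MvPolynomial.eval (fun j => z j) p) ∧
    (Φ ≤ (d : ℝ) → ∀ z, f z = 0) := by
  exact Stmt11.main_statement d hd Φ f hf hint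
end
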